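/- arXiv:1404.7421 — 7 statements merged into one kernel-verified Lean document; each statement's English description precedes it below -/
import Mathlib

section
/- Let R ⊆ ℝⁿ be a compact set with nonempty interior. Then the volume of the image of R under the quotient map to the torus ℝⁿ/ℤⁿ equals the integral over R of 1/|R ∩ (x + ℤⁿ)| dx. -/
/-! Let `N x` count the `g ∈ ℤⁿ` with `x + g ∈ R`: it is finite because `R` is bounded, and it
is `ℤⁿ`-periodic. Unfolding `∫_R 1/N` over the translates of the cube `Q = [0,1)ⁿ`, a fundamental
domain of `ℤⁿ`, turns it into `∫_Q (∑_g 1_R(x + g)) / N x dx = ∫_Q N/N = vol (Q ∩ {N ≠ 0})`,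
and `Q ∩ {N ≠ 0}` is exactly the image of `R` under the coordinatewise fractional part. -/

open MeasureTheory
open scoped ENNReal

section VAddMemCount

variable {G α : Type*} [AddGroup G] [AddAction G α]

variable (G) in
noncomputable def vaddMemCount (R : Set α) (x : α) : ℝ≥0∞ :=
  {g : G | g +ᵥ x ∈ R}.encard

lemma vaddMemCount_eq_tsum (R : Set α) (x : α) :
    vaddMemCount G R x = ∑' g : G, R.indicator 1 (g +ᵥ x) := by
  rw [vaddMemCount, ← ENNReal.tsum_set_one, tsum_subtype _ fun _ => (1 : ℝ≥0∞)]
  congr 1 with g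

lemma vaddMemCount_vadd (R : Set α) (g : G) (x : α) :
    vaddMemCount G R (g +ᵥ x) = vaddMemCount G R x := by
  simpa [vaddMemCount, Set.preimage, add_vadd] using
    congrArg ((↑) : ℕ∞ → ℝ≥0∞)
      (Set.encard_preimage_of_bijective (Equiv.addRight g).bijective {h : G | h +ᵥ x ∈ R})

lemma vaddMemCount_mul_inv {R : Set α} {x : α} (hfin : vaddMemCount G R x ≠ ∞) :
    vaddMemCount G R x * (vaddMemCount G R x)⁻¹ = {y | ∃ g : G, g +ᵥ y ∈ R}.indicator 1 x := by
  by_cases h : ∃ g : G, g +ᵥ x ∈ R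
  · rw [Set.indicator_of_mem (by exact h), Pi.one_apply]
    refine ENNReal.mul_inv_cancel ?_ ?_
    · simpa [vaddMemCount, Set.encard_eq_zero, Set.eq_empty_iff_forall_notMem] using h
    · exact hfin
  · rw [Set.indicator_of_notMem (by exact h)]
    simp_all [vaddMemCount]

variable [MeasurableSpace α] [MeasurableConstVAdd G α]

lemma MeasurableSet.measurable_indicator_vadd {R : Set α} (hR : MeasurableSet R) (g : G) :
    Measurable fun x => R.indicator (1 : α → ℝ≥0∞) (g +ᵥ x) :=
  (measurable_one.indicator hR).comp (measurable_const_vadd g)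

variable [Countable G]

lemma measurable_vaddMemCount {R : Set α} (hR : MeasurableSet R) :
    Measurable (vaddMemCount G R) := by
  simp_rw [funext (vaddMemCount_eq_tsum R)]
  exact Measurable.tsum hR.measurable_indicator_vadd

lemma measurableSet_exists_vadd_mem {R : Set α} (hR : MeasurableSet R) :
    MeasurableSet {x : α | ∃ g : G, g +ᵥ x ∈ R} := by
  simp only [Set.ofPred_exists]
  exact MeasurableSet.iUnion fun g => measurable_const_vadd g hR

theorem MeasureTheory.IsAddFundamentalDomain.setLIntegral_inv_vaddMemCount
    {μ : Measure α} [VAddInvariantMeasure G α μ] {s R : Set α}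
    (hs : IsAddFundamentalDomain G s μ) (hR : MeasurableSet R)
    (hfin : ∀ x, vaddMemCount G R x ≠ ∞) :
    ∫⁻ x in R, (vaddMemCount G R x)⁻¹ ∂μ = μ (s ∩ {x | ∃ g : G, g +ᵥ x ∈ R}) := by
  have hS := measurableSet_exists_vadd_mem (G := G) hR
  calc ∫⁻ x in R, (vaddMemCount G R x)⁻¹ ∂μ
      = ∑' g : G, ∫⁻ x in s, R.indicator 1 (g +ᵥ x) * (vaddMemCount G R x)⁻¹ ∂μ := by
        rw [← lintegral_indicator hR, hs.lintegral_eq_tsum'']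
        refine tsum_congr fun g => lintegral_congr fun x => ?_
        by_cases hx : g +ᵥ x ∈ R <;> simp [hx, vaddMemCount_vadd]
    _ = ∫⁻ x in s, vaddMemCount G R x * (vaddMemCount G R x)⁻¹ ∂μ := by
        rw [← lintegral_tsum (f := fun g x => R.indicator 1 (g +ᵥ x) * (vaddMemCount G R x)⁻¹)
          fun g => ((hR.measurable_indicator_vadd g).mul
            (measurable_vaddMemCount hR).inv).aemeasurable]
        simp_rw [ENNReal.tsum_mul_right, vaddMemCount_eq_tsum]
    _ = μ (s ∩ {x | ∃ g : G, g +ᵥ x ∈ R}) := by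
        simp_rw [vaddMemCount_mul_inv (hfin _)]
        rw [lintegral_indicator_one hS, Measure.restrict_apply hS, Set.inter_comm]

end VAddMemCount

theorem Submodule.vaddMemCount_eq_encard {S M : Type*} [Ring S] [AddCommGroup M] [Module S M]
    (L : Submodule S M) (A : Set M) (x : M) :
    vaddMemCount L A x = (A ∩ {y | y - x ∈ L}).encard := by
  have himage : A ∩ {y | y - x ∈ L} = (fun g : L => g +ᵥ x) '' {g : L | g +ᵥ x ∈ A} := by
    ext y
    constructor
    · rintro ⟨hy, hL⟩
      exact ⟨⟨y - x, hL⟩, by simpa [Submodule.vadd_def] using hy, by simp [Submodule.vadd_def]⟩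
    · rintro ⟨g, hg, rfl⟩
      exact ⟨hg, by simp [Submodule.vadd_def]⟩
  have hinj : Function.Injective fun g : L => g +ᵥ x := fun g h hgh =>
    Subtype.ext (add_right_cancel (b := x) hgh)
  rw [vaddMemCount, himage, hinj.encard_image]

namespace ZSpan

open Submodule

theorem image_fract {E ι K : Type*} [NormedField K] [NormedAddCommGroup E] [NormedSpace K E]
    [LinearOrder K] [IsStrictOrderedRing K] [FloorRing K] [Fintype ι] (b : Module.Basis ι K E)
    (R : Set E) :
    fract b '' R = fundamentalDomain b ∩ {x | ∃ g : span ℤ (Set.range b), g +ᵥ x ∈ R} := by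
  ext y
  constructor
  · rintro ⟨x, hx, rfl⟩
    refine ⟨fract_mem_fundamentalDomain b x, floor b x, ?_⟩
    simpa [Submodule.vadd_def, fract_apply] using hx
  · rintro ⟨hy, g, hg⟩
    refine ⟨g +ᵥ y, hg, ?_⟩
    rw [Submodule.vadd_def, vadd_eq_add, fract_zSpan_add b y g.2, fract_eq_self.mpr hy]

theorem setFinite_inter_sub_mem {E ι : Type*} [NormedAddCommGroup E] [NormedSpace ℝ E]
    [ProperSpace E] [Finite ι] (b : Module.Basis ι ℝ E) {R : Set E} (hR : Bornology.IsBounded R)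
    (x : E) : (R ∩ {y | y - x ∈ span ℤ (Set.range b)}).Finite := by
  refine ((setFinite_inter b (hR.vadd (-x))).image (· + x)).subset ?_
  rintro y ⟨hy, hL⟩
  exact ⟨y - x, ⟨⟨y, hy, by simp [sub_eq_neg_add]⟩, hL⟩, by simp⟩

theorem fract_pi_basisFun {ι : Type*} [Fintype ι] (x : ι → ℝ) :
    fract (Pi.basisFun ℝ ι) x = fun i => Int.fract (x i) := by
  ext i
  simpa only [Pi.basisFun_repr] using repr_fract_apply (Pi.basisFun ℝ ι) x i

end ZSpan

theorem mem_span_int_pi_basisFun_iff {ι : Type*} [Finite ι] (v : ι → ℝ) :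
    v ∈ Submodule.span ℤ (Set.range (Pi.basisFun ℝ ι)) ↔ ∀ i, ∃ m : ℤ, v i = m := by
  simp [(Pi.basisFun ℝ ι).mem_span_iff_repr_mem ℤ, eq_comm]

theorem stmt0_general (n : ℕ) (R : Set (Fin n → ℝ)) (hR : IsCompact R) :
    volume ((fun x i => Int.fract (x i)) '' R) =
      ∫⁻ x in R,
        ((Nat.card ↥(R ∩ {y : Fin n → ℝ | ∀ i, ∃ m : ℤ, y i - x i = (m : ℝ)}) : ℝ≥0∞))⁻¹ := by
  set b := Pi.basisFun ℝ (Fin n)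
  set L := Submodule.span ℤ (Set.range b)
  have hcount : ∀ x, vaddMemCount L R x =
      Nat.card ↥(R ∩ {y : Fin n → ℝ | ∀ i, ∃ m : ℤ, y i - x i = (m : ℝ)}) := by
    intro x
    have hset : {y | y - x ∈ L} = {y : Fin n → ℝ | ∀ i, ∃ m : ℤ, y i - x i = m} := by
      simp only [L, b, mem_span_int_pi_basisFun_iff, Pi.sub_apply]
    have hfin := ZSpan.setFinite_inter_sub_mem b hR.isBounded x
    rw [← hset, L.vaddMemCount_eq_encard, ← hfin.cast_ncard_eq, Nat.card_coe_set_eq,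
      ENat.toENNReal_coe]
  have hfin : ∀ x, vaddMemCount L R x ≠ ∞ := fun x => by simp [hcount]
  have : VAddInvariantMeasure L (Fin n → ℝ) volume :=
    inferInstanceAs (VAddInvariantMeasure L.toAddSubgroup _ volume)
  calc volume ((fun x i => Int.fract (x i)) '' R)
      = volume (ZSpan.fundamentalDomain b ∩ {x | ∃ g : L, g +ᵥ x ∈ R}) := by
        rw [← ZSpan.image_fract, funext (ZSpan.fract_pi_basisFun (ι := Fin n))]
    _ = ∫⁻ x in R, (vaddMemCount L R x)⁻¹ :=
        ((ZSpan.isAddFundamentalDomain b volume).setLIntegral_inv_vaddMemCount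
          hR.isClosed.measurableSet hfin).symm
    _ = _ := by simp_rw [hcount]

/-- Lemma (torus volume formula): for a compact `R ⊆ ℝⁿ` with nonempty interior,
the volume of the image of `R` in the torus `ℝⁿ/ℤⁿ` (realized via componentwise
fractional parts) equals `∫_R 1/|R ∩ (x + ℤⁿ)| dx`. -/
theorem stmt0 (n : ℕ) (R : Set (Fin n → ℝ)) (hR : IsCompact R)
    (hint : (interior R).Nonempty) :
    volume ((fun x i => Int.fract (x i)) '' R) =
      ∫⁻ x in R,
        ((Nat.card ↥(R ∩ {y : Fin n → ℝ | ∀ i, ∃ m : ℤ, y i - x i = (m : ℝ)}) : ℝ≥0∞))⁻¹ :=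
  stmt0_general n R hR
end

section
/- For convex sets K₁ ⊆ ℝ^{n₁} and K₂ ⊆ ℝ^{n₂}, the relative interior of the coproduct K₁ ◇ K₂ := conv(K₁ × {0} ∪ {0} × K₂) equals the union over λ ∈ (0,1) of (1−λ)·relint(K₁) × λ·relint(K₂). -/
open Set Pointwise Filter Topology

/-!
Write `W I S T` for `⋃ l ∈ I, ((1 - l) • S) ×ˢ (l • T)`. For convex nonempty factors the
coproduct is `W [0, 1] K₁ K₂`, and `U := W (0, 1) (relint K₁) (relint K₂)` is a nonempty subset
of it that absorbs half-open segments: `a • u + b • c ∈ U` for `u ∈ U`, `c` in the coproduct and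
`a > 0`. A point of the relative interior of the coproduct lies strictly inside a segment from a
point of `U` to a point of the coproduct, hence in `U`. Conversely, a point `z ∈ U` can be pushed
slightly beyond itself, away from any other point of `U`, without leaving the coproduct, since its
factors lie in `relint K₁`, `relint K₂` and its weight is interior to `[0, 1]`. Pushing away from
a point of the relative interior of the coproduct puts `z` strictly between that point and a point
of the coproduct, so `z` is in the relative interior as well.
-/

section IntrinsicInterior

variable {E : Type*} [AddCommGroup E] [Module ℝ E] {s : Set E} {x y : E}

theorem exists_mem_openSegment_of_eventually_add_smul_sub_mem
    (h : ∀ᶠ t : ℝ in 𝓝 0, x + t • (x - y) ∈ s) : ∃ p ∈ s, x ∈ openSegment ℝ y p := by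
  obtain ⟨t, hp, ht⟩ := ((h.filter_mono nhdsWithin_le_nhds).and
    (self_mem_nhdsWithin : Ioi (0 : ℝ) ∈ 𝓝[>] 0)).exists
  refine ⟨_, hp, t / (1 + t), 1 / (1 + t), by positivity, by positivity, by field_simp; ring, ?_⟩
  match_scalars <;> grind

variable [TopologicalSpace E]

theorem mem_intrinsicInterior_iff_mem_nhdsWithin :
    x ∈ intrinsicInterior ℝ s ↔ x ∈ affineSpan ℝ s ∧ s ∈ 𝓝[affineSpan ℝ s] x := by
  simp only [mem_intrinsicInterior, mem_interior_iff_mem_nhds]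
  constructor
  · rintro ⟨x, hx, rfl⟩
    exact ⟨x.2, preimage_coe_mem_nhds_subtype.1 hx⟩
  · rintro ⟨hx, hs⟩
    exact ⟨⟨x, hx⟩, preimage_coe_mem_nhds_subtype.2 hs, rfl⟩

variable [IsTopologicalAddGroup E] [ContinuousSMul ℝ E]

theorem eventually_add_smul_sub_mem_of_mem_intrinsicInterior (hx : x ∈ intrinsicInterior ℝ s)
    (hy : y ∈ affineSpan ℝ s) : ∀ᶠ t : ℝ in 𝓝 0, x + t • (x - y) ∈ s := by
  obtain ⟨hx, hs⟩ := mem_intrinsicInterior_iff_mem_nhdsWithin.1 hx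
  have hline : Tendsto (fun t : ℝ => x + t • (x - y)) (𝓝 0) (𝓝[affineSpan ℝ s] x) := by
    refine tendsto_nhdsWithin_iff.2 ⟨?_, .of_forall fun t => ?_⟩
    · simpa using (Continuous.tendsto (by fun_prop) 0 :
        Tendsto (fun t : ℝ => x + t • (x - y)) (𝓝 0) _)
    · simpa [vsub_eq_sub, vadd_eq_add, add_comm] using
        (affineSpan ℝ s).smul_vsub_vadd_mem t hx hy hx
  exact hline hs

theorem Convex.combo_intrinsicInterior_self_mem_intrinsicInterior (hs : Convex ℝ s)
    (hx : x ∈ intrinsicInterior ℝ s) (hy : y ∈ s) {a b : ℝ} (ha : 0 < a) (hb : 0 ≤ b)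
    (hab : a + b = 1) : a • x + b • y ∈ intrinsicInterior ℝ s := by
  obtain ⟨hxA, hxs⟩ := mem_intrinsicInterior_iff_mem_nhdsWithin.1 hx
  have hyA : y ∈ affineSpan ℝ s := subset_affineSpan ℝ s hy
  obtain rfl : b = 1 - a := by linarith
  -- `f` inverts the homothety `w ↦ a • w + (1 - a) • y`, which maps `s` into itself.
  set f : E → E := fun w => a⁻¹ • (w - y) + y
  have hf : ∀ w, a • f w + (1 - a) • y = w := fun w => by match_scalars <;> grind
  have hfz : f (a • x + (1 - a) • y) = x := by match_scalars <;> grind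
  have hfA : MapsTo f (affineSpan ℝ s) (affineSpan ℝ s) := fun w hw => by
    simpa [vsub_eq_sub, vadd_eq_add] using (affineSpan ℝ s).smul_vsub_vadd_mem a⁻¹ hw hyA hyA
  have hzA : a • x + (1 - a) • y ∈ affineSpan ℝ s :=
    subset_affineSpan ℝ s (hs (intrinsicInterior_subset hx) hy ha.le hb (by ring))
  have hf_tendsto : Tendsto f (𝓝[affineSpan ℝ s] (a • x + (1 - a) • y)) (𝓝[affineSpan ℝ s] x) := by
    have hcont : ContinuousWithinAt f (affineSpan ℝ s) (a • x + (1 - a) • y) :=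
      Continuous.continuousWithinAt (by fun_prop)
    simpa only [hfz] using hcont.tendsto_nhdsWithin hfA
  refine mem_intrinsicInterior_iff_mem_nhdsWithin.2 ⟨hzA, ?_⟩
  filter_upwards [hf_tendsto hxs] with w hw
  simpa [hf] using hs hw hy ha.le hb (by ring)

theorem Convex.mem_intrinsicInterior_of_eventually_add_smul_sub_mem (hs : Convex ℝ s)
    (hy : y ∈ intrinsicInterior ℝ s) (h : ∀ᶠ t : ℝ in 𝓝 0, x + t • (x - y) ∈ s) :
    x ∈ intrinsicInterior ℝ s := by
  obtain ⟨p, hp, a, b, ha, hb, hab, rfl⟩ := exists_mem_openSegment_of_eventually_add_smul_sub_mem h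
  exact hs.combo_intrinsicInterior_self_mem_intrinsicInterior hy hp ha hb.le hab

theorem intrinsicInterior_subset_of_combo_mem {U : Set E} (hU : U ⊆ s) (hne : U.Nonempty)
    (hcombo : ∀ u ∈ U, ∀ c ∈ s, ∀ a b : ℝ, 0 < a → 0 ≤ b → a + b = 1 → a • u + b • c ∈ U) :
    intrinsicInterior ℝ s ⊆ U := by
  intro x hx
  obtain ⟨u, hu⟩ := hne
  obtain ⟨p, hp, a, b, ha, hb, hab, rfl⟩ := exists_mem_openSegment_of_eventually_add_smul_sub_mem
    (eventually_add_smul_sub_mem_of_mem_intrinsicInterior hx (subset_affineSpan ℝ s (hU hu)))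
  exact hcombo u hu p hp a b ha hb.le hab

theorem Convex.smul_add_smul_mem_smul_intrinsicInterior (hs : Convex ℝ s)
    (hx : x ∈ intrinsicInterior ℝ s) (hy : y ∈ s) {p q : ℝ} (hp : 0 < p) (hq : 0 ≤ q) :
    p • x + q • y ∈ (p + q) • intrinsicInterior ℝ s := by
  have hpq : p + q ≠ 0 := by positivity
  refine ⟨_, hs.combo_intrinsicInterior_self_mem_intrinsicInterior hx hy
    (a := p / (p + q)) (b := q / (p + q)) (by positivity) (by positivity) (by field_simp), ?_⟩
  match_scalars <;> field_simp

theorem eventually_smul_add_smul_sub_mem_smul (hx : x ∈ intrinsicInterior ℝ s)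
    (hy : y ∈ affineSpan ℝ s) {p : ℝ} (hp : 0 < p) (r : ℝ) :
    ∀ᶠ t : ℝ in 𝓝 0, p • x + t • (p • x - r • y) ∈ (p + t * (p - r)) • s := by
  have hden : ∀ᶠ t : ℝ in 𝓝 0, p + t * (p - r) ≠ 0 :=
    (Continuous.tendsto (by fun_prop) 0).eventually_ne (by simpa using hp.ne')
  have hstretch : Tendsto (fun t : ℝ => t * r / (p + t * (p - r))) (𝓝 0) (𝓝 0) := by
    have hcont : ContinuousAt (fun t : ℝ => t * r / (p + t * (p - r))) 0 :=
      ContinuousAt.div (by fun_prop) (by fun_prop) (by simpa using hp.ne')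
    simpa using hcont.tendsto
  filter_upwards [hden, hstretch.eventually
    (eventually_add_smul_sub_mem_of_mem_intrinsicInterior hx hy)] with t ht hmem
  refine ⟨_, hmem, ?_⟩
  match_scalars <;> grind

end IntrinsicInterior

section WeightedProd

variable {E F : Type*} [AddCommGroup E] [Module ℝ E] [AddCommGroup F] [Module ℝ F]

def weightedProd (I : Set ℝ) (S : Set E) (T : Set F) : Set (E × F) :=
  ⋃ l ∈ I, ((1 - l) • S) ×ˢ (l • T)

variable {I I' : Set ℝ} {S S' K₁ : Set E} {T T' K₂ : Set F} {z w : E × F}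

theorem mem_weightedProd :
    z ∈ weightedProd I S T ↔ ∃ l ∈ I, ∃ x ∈ S, ∃ y ∈ T, ((1 - l) • x, l • y) = z := by
  simp only [weightedProd, mem_iUnion, mem_prod, mem_smul_set, exists_prop]
  constructor
  · rintro ⟨l, hl, ⟨x, hx, hz₁⟩, ⟨y, hy, hz₂⟩⟩
    exact ⟨l, hl, x, hx, y, hy, Prod.ext hz₁ hz₂⟩
  · rintro ⟨l, hl, x, hx, y, hy, rfl⟩
    exact ⟨l, hl, ⟨x, hx, rfl⟩, ⟨y, hy, rfl⟩⟩

theorem weightedProd_mono (hI : I ⊆ I') (hS : S ⊆ S') (hT : T ⊆ T') :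
    weightedProd I S T ⊆ weightedProd I' S' T' :=
  biUnion_mono hI fun _ _ => prod_mono (smul_set_mono hS) (smul_set_mono hT)

theorem weightedProd_Ioo_nonempty (hS : S.Nonempty) (hT : T.Nonempty) :
    (weightedProd (Ioo 0 1) S T).Nonempty :=
  let ⟨x, hx⟩ := hS
  let ⟨y, hy⟩ := hT
  ⟨_, mem_weightedProd.2 ⟨1 / 2, by norm_num, x, hx, y, hy, rfl⟩⟩

theorem convexHull_image_inl_union_image_inr (h₁ : Convex ℝ K₁) (h₁n : K₁.Nonempty)
    (h₂ : Convex ℝ K₂) (h₂n : K₂.Nonempty) :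
    convexHull ℝ ((fun x => (x, (0 : F))) '' K₁ ∪ (fun y => ((0 : E), y)) '' K₂) =
      weightedProd (Icc 0 1) K₁ K₂ := by
  have h₁' : Convex ℝ ((fun x => (x, (0 : F))) '' K₁) := h₁.linear_image (LinearMap.inl ℝ E F)
  have h₂' : Convex ℝ ((fun y => ((0 : E), y)) '' K₂) := h₂.linear_image (LinearMap.inr ℝ E F)
  rw [h₁'.convexHull_union h₂' (h₁n.image _) (h₂n.image _)]
  ext z
  simp only [mem_convexJoin, segment, mem_weightedProd, mem_image, mem_Icc]
  constructor
  · rintro ⟨_, ⟨x, hx, rfl⟩, _, ⟨y, hy, rfl⟩, a, b, ha, hb, hab, rfl⟩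
    obtain rfl : a = 1 - b := by linarith
    exact ⟨b, ⟨hb, by linarith⟩, x, hx, y, hy, by simp⟩
  · rintro ⟨l, ⟨hl₀, hl₁⟩, x, hx, y, hy, rfl⟩
    exact ⟨_, ⟨x, hx, rfl⟩, _, ⟨y, hy, rfl⟩, 1 - l, l, by linarith, hl₀, by ring, by simp⟩

variable [TopologicalSpace E] [IsTopologicalAddGroup E] [ContinuousSMul ℝ E]
  [TopologicalSpace F] [IsTopologicalAddGroup F] [ContinuousSMul ℝ F]

theorem combo_mem_weightedProd_Ioo (h₁ : Convex ℝ K₁) (h₂ : Convex ℝ K₂)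
    (hz : z ∈ weightedProd (Ioo 0 1) (intrinsicInterior ℝ K₁) (intrinsicInterior ℝ K₂))
    (hw : w ∈ weightedProd (Icc 0 1) K₁ K₂) {a b : ℝ} (ha : 0 < a) (hb : 0 ≤ b)
    (hab : a + b = 1) :
    a • z + b • w ∈ weightedProd (Ioo 0 1) (intrinsicInterior ℝ K₁) (intrinsicInterior ℝ K₂) := by
  obtain ⟨m, ⟨hm₀, hm₁⟩, x, hx, y, hy, rfl⟩ := mem_weightedProd.1 hz
  obtain ⟨l, ⟨hl₀, hl₁⟩, x', hx', y', hy', rfl⟩ := mem_weightedProd.1 hw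
  obtain ⟨x'', hx'', hx''_eq⟩ := h₁.smul_add_smul_mem_smul_intrinsicInterior hx hx'
    (p := a * (1 - m)) (q := b * (1 - l)) (by nlinarith) (by nlinarith)
  obtain ⟨y'', hy'', hy''_eq⟩ := h₂.smul_add_smul_mem_smul_intrinsicInterior hy hy'
    (p := a * m) (q := b * l) (by nlinarith) (by nlinarith)
  refine mem_weightedProd.2 ⟨a * m + b * l, ⟨by nlinarith, by nlinarith⟩, x'', hx'', y'', hy'', ?_⟩
  rw [show 1 - (a * m + b * l) = a * (1 - m) + b * (1 - l) by linear_combination -hab]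
  beta_reduce at hx''_eq hy''_eq
  simp only [hx''_eq, hy''_eq, Prod.smul_mk, Prod.mk_add_mk, smul_smul]

theorem eventually_add_smul_sub_mem_weightedProd_Icc
    (hz : z ∈ weightedProd (Ioo 0 1) (intrinsicInterior ℝ K₁) (intrinsicInterior ℝ K₂))
    (hw : w ∈ weightedProd (Ioo 0 1) (intrinsicInterior ℝ K₁) (intrinsicInterior ℝ K₂)) :
    ∀ᶠ t : ℝ in 𝓝 0, z + t • (z - w) ∈ weightedProd (Icc 0 1) K₁ K₂ := by
  obtain ⟨l, ⟨hl₀, hl₁⟩, x, hx, y, hy, rfl⟩ := mem_weightedProd.1 hz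
  obtain ⟨m, -, a, ha, b, hb, rfl⟩ := mem_weightedProd.1 hw
  have hweight : ∀ᶠ t : ℝ in 𝓝 0, l + t * (l - m) ∈ Icc 0 1 :=
    (Continuous.tendsto (by fun_prop) 0).eventually_mem
      (Icc_mem_nhds (by simpa using hl₀) (by simpa using hl₁))
  filter_upwards [hweight, eventually_smul_add_smul_sub_mem_smul hx
    (subset_affineSpan ℝ _ (intrinsicInterior_subset ha)) (sub_pos.2 hl₁) (1 - m),
    eventually_smul_add_smul_sub_mem_smul hy
    (subset_affineSpan ℝ _ (intrinsicInterior_subset hb)) hl₀ m] with t ht hx' hy'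
  obtain ⟨x', hx', hx'_eq⟩ := hx'
  obtain ⟨y', hy', hy'_eq⟩ := hy'
  refine mem_weightedProd.2 ⟨_, ht, x', hx', y', hy', ?_⟩
  beta_reduce at hx'_eq hy'_eq
  rw [show 1 - (l + t * (l - m)) = 1 - l + t * (1 - l - (1 - m)) by ring, hx'_eq, hy'_eq]
  simp only [Prod.smul_mk, Prod.mk_add_mk, Prod.mk_sub_mk]

theorem intrinsicInterior_weightedProd_Icc_subset (h₁ : Convex ℝ K₁) (h₂ : Convex ℝ K₂)
    (h₁n : (intrinsicInterior ℝ K₁).Nonempty) (h₂n : (intrinsicInterior ℝ K₂).Nonempty) :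
    intrinsicInterior ℝ (weightedProd (Icc 0 1) K₁ K₂) ⊆
      weightedProd (Ioo 0 1) (intrinsicInterior ℝ K₁) (intrinsicInterior ℝ K₂) :=
  intrinsicInterior_subset_of_combo_mem
    (weightedProd_mono Ioo_subset_Icc_self intrinsicInterior_subset intrinsicInterior_subset)
    (weightedProd_Ioo_nonempty h₁n h₂n)
    fun _ hu _ hc _ _ ha hb hab => combo_mem_weightedProd_Ioo h₁ h₂ hu hc ha hb hab

end WeightedProd

/-- For nonempty convex `K₁ ⊆ ℝ^{n₁}`, `K₂ ⊆ ℝ^{n₂}`, the relative interior of the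
coproduct `K₁ ◇ K₂ = conv(K₁ × {0} ∪ {0} × K₂)` equals
`⋃_{λ ∈ (0,1)} (1−λ)·relint(K₁) × λ·relint(K₂)`. -/
theorem stmt4 (n₁ n₂ : ℕ) (K₁ : Set (Fin n₁ → ℝ)) (K₂ : Set (Fin n₂ → ℝ))
    (h₁v : Convex ℝ K₁) (h₁n : K₁.Nonempty)
    (h₂v : Convex ℝ K₂) (h₂n : K₂.Nonempty) :
    intrinsicInterior ℝ
        (convexHull ℝ
          ((fun x => (x, (0 : Fin n₂ → ℝ))) '' K₁ ∪ (fun y => ((0 : Fin n₁ → ℝ), y)) '' K₂)) =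
      ⋃ l ∈ Ioo (0 : ℝ) 1,
        ((1 - l) • intrinsicInterior ℝ K₁) ×ˢ (l • intrinsicInterior ℝ K₂) := by
  have hhull := convexHull_image_inl_union_image_inr h₁v h₁n h₂v h₂n
  have hconv : Convex ℝ (weightedProd (Icc 0 1) K₁ K₂) := hhull ▸ convex_convexHull ℝ _
  have hsub := intrinsicInterior_weightedProd_Icc_subset h₁v h₂v
    (h₁n.intrinsicInterior h₁v) (h₂n.intrinsicInterior h₂v)
  rw [hhull]
  refine hsub.antisymm fun z hz => ?_
  obtain ⟨u, hu⟩ := ((weightedProd_Ioo_nonempty h₁n h₂n).mono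
    (weightedProd_mono Ioo_subset_Icc_self subset_rfl subset_rfl)).intrinsicInterior hconv
  exact hconv.mem_intrinsicInterior_of_eventually_add_smul_sub_mem hu
    (eventually_add_smul_sub_mem_weightedProd_Icc hz (hsub hu))
end

section
/- Let P₁ ⊆ ℝ^{n₁}, P₂ ⊆ ℝ^{n₂} be polytopes containing the respective origins and let P := P₁ ◇ P₂ be their coproduct. For u = (u₁, u₂): if h(P₁,u₁) = h(P₂,u₂) then F(P,u) = F(P₁,u₁) ◇ F(P₂,u₂); if h(P₁,u₁) > h(P₂,u₂) then F(P,u) = F(P₁,u₁) × {0}; and if h(P₁,u₁) < h(P₂,u₂) then F(P,u) = {0} × F(P₂,u₂). -/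
open Set

noncomputable def supp {n : ℕ} (K : Set (Fin n → ℝ)) (u : Fin n → ℝ) : ℝ :=
  sSup ((fun x => ∑ i, u i * x i) '' K)

noncomputable def supp2 {n₁ n₂ : ℕ} (K : Set ((Fin n₁ → ℝ) × (Fin n₂ → ℝ)))
    (u : (Fin n₁ → ℝ) × (Fin n₂ → ℝ)) : ℝ :=
  sSup ((fun p => ∑ i, u.1 i * p.1 i + ∑ j, u.2 j * p.2 j) '' K)

/-- The exposed face of `K` in direction `u`. -/
noncomputable def expFace {n : ℕ} (K : Set (Fin n → ℝ)) (u : Fin n → ℝ) : Set (Fin n → ℝ) :=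
  {x ∈ K | ∑ i, u i * x i = supp K u}

noncomputable def expFace2 {n₁ n₂ : ℕ} (K : Set ((Fin n₁ → ℝ) × (Fin n₂ → ℝ)))
    (u : (Fin n₁ → ℝ) × (Fin n₂ → ℝ)) : Set ((Fin n₁ → ℝ) × (Fin n₂ → ℝ)) :=
  {p ∈ K | ∑ i, u.1 i * p.1 i + ∑ j, u.2 j * p.2 j = supp2 K u}

def coprod {n₁ n₂ : ℕ} (A : Set (Fin n₁ → ℝ)) (B : Set (Fin n₂ → ℝ)) :
    Set ((Fin n₁ → ℝ) × (Fin n₂ → ℝ)) :=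
  convexHull ℝ ((fun x => (x, (0 : Fin n₂ → ℝ))) '' A ∪ (fun y => ((0 : Fin n₁ → ℝ), y)) '' B)

/-!
A linear functional attains its maximum over `convexHull S` exactly on the convex hull of its
maximizers in `S`: a convex combination reaches the maximum only if every point carrying positive
weight does. The coproduct is the hull of `P₁ × {0} ∪ {0} × P₂`, on which `(u₁, u₂)` restricts to
`u₁` and `u₂`, so its support value is `max (h(P₁,u₁)) (h(P₂,u₂))` and its maximizing vertices are
those of the factors attaining that maximum.
-/

lemma IsGreatest.sep_eq_empty_of_lt {α β : Type*} [Preorder β] {f : α → β} {S : Set α}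
    {M c : β} (h : IsGreatest (f '' S) M) (hc : M < c) : {v ∈ S | f v = c} = ∅ :=
  eq_empty_of_forall_notMem fun _ hv => (h.2 (mem_image_of_mem f hv.1)).not_gt (hv.2 ▸ hc)

section ConvexHull

variable {𝕜 E : Type*} [Field 𝕜] [LinearOrder 𝕜] [IsStrictOrderedRing 𝕜]
  [AddCommGroup E] [Module 𝕜 E] {S : Set E} {ℓ : E →ₗ[𝕜] 𝕜} {M : 𝕜}

lemma IsGreatest.image_convexHull (h : IsGreatest (ℓ '' S) M) :
    IsGreatest (ℓ '' convexHull 𝕜 S) M := by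
  refine ⟨image_mono (subset_convexHull 𝕜 S) h.1, ?_⟩
  rintro _ ⟨x, hx, rfl⟩
  have hS : S ⊆ ℓ ⁻¹' Iic M := fun v hv => h.2 (mem_image_of_mem ℓ hv)
  exact convexHull_min hS ((convex_Iic M).linear_preimage ℓ) hx

lemma sep_convexHull_eq_convexHull_sep (hS : ∀ v ∈ S, ℓ v ≤ M) :
    {x ∈ convexHull 𝕜 S | ℓ x = M} = convexHull 𝕜 {v ∈ S | ℓ v = M} := by
  classical
  refine Subset.antisymm ?_ (convexHull_min (fun v hv => ⟨subset_convexHull 𝕜 S hv.1, hv.2⟩)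
    ((convex_convexHull 𝕜 S).inter ((convex_singleton M).linear_preimage ℓ)))
  rintro x ⟨hx, hℓx⟩
  obtain ⟨ι, _, w, z, hw₀, hw₁, hz, rfl⟩ := mem_convexHull_iff_exists_fintype.1 hx
  have hslack : ∑ i, w i * (M - ℓ (z i)) = 0 := by
    simp only [mul_sub, Finset.sum_sub_distrib, ← Finset.sum_mul, hw₁, one_mul]
    rw [← hℓx, map_sum]
    simp [smul_eq_mul]
  have hvanish : ∀ i, w i ≠ 0 → ℓ (z i) = M := by
    intro i hi
    have := (Finset.sum_eq_zero_iff_of_nonneg fun j _ =>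
      mul_nonneg (hw₀ j) (sub_nonneg.2 (hS _ (hz j)))).1 hslack i (Finset.mem_univ i)
    exact (sub_eq_zero.1 ((mul_eq_zero.1 this).resolve_left hi)).symm
  rw [← Finset.sum_filter_of_ne (p := fun i => ℓ (z i) = M)
    fun i _ hi => hvanish i fun h => hi (by rw [h, zero_smul])]
  refine (convex_convexHull 𝕜 _).sum_mem (fun i _ => hw₀ i) ?_
    fun i hi => subset_convexHull 𝕜 _ ⟨hz i, (Finset.mem_filter.1 hi).2⟩
  rwa [Finset.sum_filter_of_ne fun i _ hi => hvanish i hi]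

end ConvexHull

section Coproduct

variable {n₁ n₂ : ℕ}

lemma coprod_convexHull (A : Set (Fin n₁ → ℝ)) (B : Set (Fin n₂ → ℝ)) :
    coprod (convexHull ℝ A) (convexHull ℝ B) =
      convexHull ℝ ((fun x => (x, (0 : Fin n₂ → ℝ))) '' A ∪
        (fun y => ((0 : Fin n₁ → ℝ), y)) '' B) := by
  have hinl := (LinearMap.inl ℝ (Fin n₁ → ℝ) (Fin n₂ → ℝ)).image_convexHull A
  have hinr := (LinearMap.inr ℝ (Fin n₁ → ℝ) (Fin n₂ → ℝ)).image_convexHull B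
  simp only [LinearMap.coe_inl, LinearMap.coe_inr] at hinl hinr
  rw [coprod, hinl, hinr, convexHull_convexHull_union_left, convexHull_convexHull_union_right]

lemma coprod_empty_right {A : Set (Fin n₁ → ℝ)} (hA : Convex ℝ A) :
    coprod A (∅ : Set (Fin n₂ → ℝ)) = (fun x => (x, (0 : Fin n₂ → ℝ))) '' A := by
  simpa [coprod, LinearMap.coe_inl] using
    (hA.linear_image (LinearMap.inl ℝ (Fin n₁ → ℝ) (Fin n₂ → ℝ))).convexHull_eq

lemma coprod_empty_left {B : Set (Fin n₂ → ℝ)} (hB : Convex ℝ B) :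
    coprod (∅ : Set (Fin n₁ → ℝ)) B = (fun y => ((0 : Fin n₁ → ℝ), y)) '' B := by
  simpa [coprod, LinearMap.coe_inr] using
    (hB.linear_image (LinearMap.inr ℝ (Fin n₁ → ℝ) (Fin n₂ → ℝ))).convexHull_eq

end Coproduct

section Faces

variable {n n₁ n₂ : ℕ}

lemma exists_isGreatest_dotProduct_image {V : Finset (Fin n → ℝ)} (hV : V.Nonempty)
    (u : Fin n → ℝ) : ∃ M, IsGreatest ((u ⬝ᵥ ·) '' (V : Set (Fin n → ℝ))) M :=
  ⟨_, by simpa using (V.image (u ⬝ᵥ ·)).isGreatest_max' (hV.image _)⟩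

variable {S : Set (Fin n → ℝ)} {u : Fin n → ℝ} {M : ℝ}

lemma supp_convexHull (h : IsGreatest ((u ⬝ᵥ ·) '' S) M) : supp (convexHull ℝ S) u = M :=
  (IsGreatest.image_convexHull (ℓ := dotProductBilin ℝ ℝ u) h).csSup_eq

lemma expFace_convexHull (h : IsGreatest ((u ⬝ᵥ ·) '' S) M) :
    expFace (convexHull ℝ S) u = convexHull ℝ {v ∈ S | u ⬝ᵥ v = M} := by
  rw [expFace, supp_convexHull h]
  exact sep_convexHull_eq_convexHull_sep (ℓ := dotProductBilin ℝ ℝ u)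
    fun v hv => h.2 (mem_image_of_mem _ hv)

lemma expFace2_coprod_convexHull {A : Set (Fin n₁ → ℝ)} {B : Set (Fin n₂ → ℝ)}
    {u₁ : Fin n₁ → ℝ} {u₂ : Fin n₂ → ℝ} {M₁ M₂ : ℝ}
    (h₁ : IsGreatest ((u₁ ⬝ᵥ ·) '' A) M₁) (h₂ : IsGreatest ((u₂ ⬝ᵥ ·) '' B) M₂) :
    expFace2 (coprod (convexHull ℝ A) (convexHull ℝ B)) (u₁, u₂) =
      coprod (convexHull ℝ {a ∈ A | u₁ ⬝ᵥ a = max M₁ M₂})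
        (convexHull ℝ {b ∈ B | u₂ ⬝ᵥ b = max M₁ M₂}) := by
  set L := (dotProductBilin ℝ ℝ u₁).coprod (dotProductBilin ℝ ℝ u₂)
  have hL : IsGreatest (L '' ((fun x => (x, (0 : Fin n₂ → ℝ))) '' A ∪
      (fun y => ((0 : Fin n₁ → ℝ), y)) '' B)) (max M₁ M₂) := by
    rw [image_union, image_image, image_image]
    simpa [L] using h₁.union h₂
  rw [coprod_convexHull, coprod_convexHull]
  change {p ∈ _ | L p = sSup (L '' _)} = _
  rw [hL.image_convexHull.csSup_eq,
    sep_convexHull_eq_convexHull_sep fun p hp => hL.2 (mem_image_of_mem _ hp)]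
  congr 1
  ext p
  simp only [L, mem_sep_iff, mem_union, mem_image]
  aesop

end Faces

/-- Description of the exposed faces of the coproduct `P₁ ◇ P₂` of polytopes containing
the respective origins, according to the comparison of `h(P₁,u₁)` and `h(P₂,u₂)`. -/
theorem stmt6 (n₁ n₂ : ℕ) (V₁ : Finset (Fin n₁ → ℝ)) (V₂ : Finset (Fin n₂ → ℝ))
    (h₁ : (0 : Fin n₁ → ℝ) ∈ convexHull ℝ (V₁ : Set (Fin n₁ → ℝ)))
    (h₂ : (0 : Fin n₂ → ℝ) ∈ convexHull ℝ (V₂ : Set (Fin n₂ → ℝ)))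
    (u₁ : Fin n₁ → ℝ) (u₂ : Fin n₂ → ℝ) :
    (supp (convexHull ℝ (V₁ : Set (Fin n₁ → ℝ))) u₁ =
        supp (convexHull ℝ (V₂ : Set (Fin n₂ → ℝ))) u₂ →
      expFace2 (coprod (convexHull ℝ (V₁ : Set (Fin n₁ → ℝ)))
          (convexHull ℝ (V₂ : Set (Fin n₂ → ℝ)))) (u₁, u₂) =
        coprod (expFace (convexHull ℝ (V₁ : Set (Fin n₁ → ℝ))) u₁)
          (expFace (convexHull ℝ (V₂ : Set (Fin n₂ → ℝ))) u₂)) ∧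
    (supp (convexHull ℝ (V₂ : Set (Fin n₂ → ℝ))) u₂ <
        supp (convexHull ℝ (V₁ : Set (Fin n₁ → ℝ))) u₁ →
      expFace2 (coprod (convexHull ℝ (V₁ : Set (Fin n₁ → ℝ)))
          (convexHull ℝ (V₂ : Set (Fin n₂ → ℝ)))) (u₁, u₂) =
        (fun x => (x, (0 : Fin n₂ → ℝ))) ''
          expFace (convexHull ℝ (V₁ : Set (Fin n₁ → ℝ))) u₁) ∧
    (supp (convexHull ℝ (V₁ : Set (Fin n₁ → ℝ))) u₁ <
        supp (convexHull ℝ (V₂ : Set (Fin n₂ → ℝ))) u₂ →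
      expFace2 (coprod (convexHull ℝ (V₁ : Set (Fin n₁ → ℝ)))
          (convexHull ℝ (V₂ : Set (Fin n₂ → ℝ)))) (u₁, u₂) =
        (fun y => ((0 : Fin n₁ → ℝ), y)) ''
          expFace (convexHull ℝ (V₂ : Set (Fin n₂ → ℝ))) u₂) := by
  have hV₁ : V₁.Nonempty := Finset.nonempty_iff_ne_empty.2 (by rintro rfl; simp at h₁)
  have hV₂ : V₂.Nonempty := Finset.nonempty_iff_ne_empty.2 (by rintro rfl; simp at h₂)
  obtain ⟨M₁, hM₁⟩ := exists_isGreatest_dotProduct_image hV₁ u₁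
  obtain ⟨M₂, hM₂⟩ := exists_isGreatest_dotProduct_image hV₂ u₂
  rw [supp_convexHull hM₁, supp_convexHull hM₂, expFace2_coprod_convexHull hM₁ hM₂,
    expFace_convexHull hM₁, expFace_convexHull hM₂]
  refine ⟨fun h => ?_, fun h => ?_, fun h => ?_⟩
  · rw [← h, max_self]
  · rw [max_eq_left h.le, hM₂.sep_eq_empty_of_lt h, convexHull_empty,
      coprod_empty_right (convex_convexHull ℝ _)]
  · rw [max_eq_right h.le, hM₁.sep_eq_empty_of_lt h, convexHull_empty,
      coprod_empty_left (convex_convexHull ℝ _)]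
end

section
/- Let P₁ ⊆ ℝ^{n₁} and P₂ ⊆ ℝ^{n₂} be full-dimensional polytopes containing the respective origins, and suppose F₁ is a face of P₁ containing the origin of ℝ^{n₁} and F₂ is a face of P₂ containing the origin of ℝ^{n₂}. Then F₁ ◇ F₂ is a face of P₁ ◇ P₂ of dimension dim(F₁) + dim(F₂). -/
open Set

/-- `F` is a face of the polytope `P`: it is empty, all of `P`, or the set of
maximizers in `P` of some linear functional. -/
def IsFace {V : Type*} [AddCommGroup V] [Module ℝ V] (P F : Set V) : Prop :=
  F = ∅ ∨ F = P ∨ ∃ u : V →ₗ[ℝ] ℝ, F = {x ∈ P | ∀ y ∈ P, u y ≤ u x}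

/-- The (affine) dimension of a set: the dimension of its affine hull. -/
noncomputable def adim {V : Type*} [AddCommGroup V] [Module ℝ V] (S : Set V) : ℕ :=
  Module.finrank ℝ (affineSpan ℝ S).direction

section Aux

variable {V : Type*} [AddCommGroup V] [Module ℝ V]

lemma mem_convexHull_zero_level {s : Set V} {u : V →ₗ[ℝ] ℝ}
    (hs : ∀ p ∈ s, u p ≤ 0) {z : V} (hz : z ∈ convexHull ℝ s) (hz0 : u z = 0) :
    z ∈ convexHull ℝ {p ∈ s | u p = 0} := by
  rw [convexHull_eq] at hz
  obtain ⟨ι, t, w, f, hw0, hw1, hfs, hc⟩ := hz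
  have hzsum : z = ∑ i ∈ t, w i • f i := by
    rw [← hc, Finset.centerMass_eq_of_sum_1 _ _ hw1]
  have husum : ∑ i ∈ t, w i * u (f i) = 0 := by
    rw [← hz0, hzsum, map_sum]
    simp [smul_eq_mul]
  have hval : ∀ i ∈ t, w i * u (f i) = 0 := by
    rw [← Finset.sum_eq_zero_iff_of_nonpos
      (fun i hi => mul_nonpos_of_nonneg_of_nonpos (hw0 i hi) (hs _ (hfs i hi)))]
    exact husum
  have hfilter : {i ∈ t | w i ≠ 0}.centerMass w f = z := by
    rw [Finset.centerMass_filter_ne_zero, hc]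
  rw [← hfilter]
  refine Finset.centerMass_mem_convexHull _ (fun i hi => hw0 i (Finset.mem_filter.1 hi).1)
    ?_ (fun i hi => ?_)
  · have h1 : ∑ i ∈ {i ∈ t | w i ≠ 0}, w i = 1 := by
      rw [Finset.sum_filter_ne_zero, hw1]
    rw [h1]; norm_num
  · obtain ⟨hit, hwi⟩ := Finset.mem_filter.1 hi
    refine ⟨hfs i hit, ?_⟩
    rcases mul_eq_zero.1 (hval i hit) with h | h
    · exact absurd h hwi
    · exact h

lemma face_exists {P F : Set V} (h : IsFace P F) (hne : F.Nonempty) :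
    ∃ u : V →ₗ[ℝ] ℝ, F = {x ∈ P | ∀ y ∈ P, u y ≤ u x} := by
  rcases h with h | h | h
  · exact absurd h hne.ne_empty
  · exact ⟨0, by simp [h]⟩
  · exact h

lemma adim_zero_mem {S : Set V} (h : (0 : V) ∈ S) :
    adim S = Module.finrank ℝ (Submodule.span ℝ S) := by
  have h1 : affineSpan ℝ S = (Submodule.span ℝ S).toAffineSubspace := by
    apply SetLike.coe_injective
    rw [← Set.insert_eq_self.2 h, affineSpan_insert_zero, Submodule.span_insert_zero]
    ext x
    simp [Submodule.mem_toAffineSubspace]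
  unfold adim
  rw [h1, Submodule.toAffineSubspace_direction]

lemma span_convexHull (s : Set V) :
    Submodule.span ℝ (convexHull ℝ s) = Submodule.span ℝ s :=
  le_antisymm
    (Submodule.span_le.2 (convexHull_min Submodule.subset_span (Submodule.span ℝ s).convex))
    (Submodule.span_mono (subset_convexHull ℝ s))

end Aux

def prodEquivAux {M N : Type*} [AddCommGroup M] [Module ℝ M] [AddCommGroup N] [Module ℝ N]
    (p : Submodule ℝ M) (q : Submodule ℝ N) : (p.prod q) ≃ₗ[ℝ] p × q where
  toFun z := (⟨z.1.1, z.2.1⟩, ⟨z.1.2, z.2.2⟩)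
  invFun z := ⟨(z.1.1, z.2.1), z.1.2, z.2.2⟩
  map_add' a b := rfl
  map_smul' c a := rfl
  left_inv a := rfl
  right_inv a := rfl

lemma finrank_prod_submodule {M N : Type*} [AddCommGroup M] [Module ℝ M] [AddCommGroup N]
    [Module ℝ N] [FiniteDimensional ℝ M] [FiniteDimensional ℝ N]
    (p : Submodule ℝ M) (q : Submodule ℝ N) :
    Module.finrank ℝ (p.prod q) = Module.finrank ℝ p + Module.finrank ℝ q := by
  rw [(prodEquivAux p q).finrank_eq, Module.finrank_prod]

/-- If `F₁`, `F₂` are nonempty faces of full-dimensional polytopes `P₁ ∋ 0`, `P₂ ∋ 0`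
with `0 ∈ F₁`, `0 ∈ F₂`, then `F₁ ◇ F₂` is a face of `P₁ ◇ P₂` of dimension
`dim F₁ + dim F₂`. -/
theorem stmt8 (n₁ n₂ : ℕ) (V₁ : Finset (Fin n₁ → ℝ)) (V₂ : Finset (Fin n₂ → ℝ))
    (F₁ : Set (Fin n₁ → ℝ)) (F₂ : Set (Fin n₂ → ℝ))
    (h0₁ : (0 : Fin n₁ → ℝ) ∈ convexHull ℝ (V₁ : Set (Fin n₁ → ℝ)))
    (h0₂ : (0 : Fin n₂ → ℝ) ∈ convexHull ℝ (V₂ : Set (Fin n₂ → ℝ)))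
    (hd₁ : adim (convexHull ℝ (V₁ : Set (Fin n₁ → ℝ))) = n₁)
    (hd₂ : adim (convexHull ℝ (V₂ : Set (Fin n₂ → ℝ))) = n₂)
    (hF₁ : IsFace (convexHull ℝ (V₁ : Set (Fin n₁ → ℝ))) F₁)
    (hF₂ : IsFace (convexHull ℝ (V₂ : Set (Fin n₂ → ℝ))) F₂)
    (hne₁ : F₁.Nonempty) (hne₂ : F₂.Nonempty)
    (hn0₁ : (0 : Fin n₁ → ℝ) ∈ F₁) (hn0₂ : (0 : Fin n₂ → ℝ) ∈ F₂) :
    IsFace (coprod (convexHull ℝ (V₁ : Set (Fin n₁ → ℝ)))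
        (convexHull ℝ (V₂ : Set (Fin n₂ → ℝ)))) (coprod F₁ F₂) ∧
      adim (coprod F₁ F₂) = adim F₁ + adim F₂ := by
  obtain ⟨u₁, hu₁⟩ := face_exists hF₁ hne₁
  obtain ⟨u₂, hu₂⟩ := face_exists hF₂ hne₂
  set P₁ := convexHull ℝ (V₁ : Set (Fin n₁ → ℝ)) with hP₁def
  set P₂ := convexHull ℝ (V₂ : Set (Fin n₂ → ℝ)) with hP₂def
  have hle₁ : ∀ y ∈ P₁, u₁ y ≤ 0 := by
    have h := hu₁ ▸ hn0₁
    intro y hy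
    simpa using h.2 y hy
  have hle₂ : ∀ y ∈ P₂, u₂ y ≤ 0 := by
    have h := hu₂ ▸ hn0₂
    intro y hy
    simpa using h.2 y hy
  have hF₁' : F₁ = {x ∈ P₁ | u₁ x = 0} := by
    rw [hu₁]
    ext x
    simp only [mem_setOf_eq]
    constructor
    · rintro ⟨hx, hmax⟩
      refine ⟨hx, le_antisymm (hle₁ x hx) ?_⟩
      simpa using hmax 0 h0₁
    · rintro ⟨hx, hx0⟩
      exact ⟨hx, fun y hy => hx0 ▸ hle₁ y hy⟩
  have hF₂' : F₂ = {x ∈ P₂ | u₂ x = 0} := by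
    rw [hu₂]
    ext x
    simp only [mem_setOf_eq]
    constructor
    · rintro ⟨hx, hmax⟩
      refine ⟨hx, le_antisymm (hle₂ x hx) ?_⟩
      simpa using hmax 0 h0₂
    · rintro ⟨hx, hx0⟩
      exact ⟨hx, fun y hy => hx0 ▸ hle₂ y hy⟩
  have hF₁sub : F₁ ⊆ P₁ := by rw [hF₁']; exact fun x hx => hx.1
  have hF₂sub : F₂ ⊆ P₂ := by rw [hF₂']; exact fun x hx => hx.1
  set u : ((Fin n₁ → ℝ) × (Fin n₂ → ℝ)) →ₗ[ℝ] ℝ :=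
    u₁.comp (LinearMap.fst ℝ _ _) + u₂.comp (LinearMap.snd ℝ _ _) with hudef
  have huapp : ∀ p : (Fin n₁ → ℝ) × (Fin n₂ → ℝ), u p = u₁ p.1 + u₂ p.2 := fun p => rfl
  set S := ((fun x => (x, (0 : Fin n₂ → ℝ))) '' P₁ ∪
    (fun y => ((0 : Fin n₁ → ℝ), y)) '' P₂) with hSdef
  set T := ((fun x => (x, (0 : Fin n₂ → ℝ))) '' F₁ ∪
    (fun y => ((0 : Fin n₁ → ℝ), y)) '' F₂) with hTdef
  have hSP : coprod P₁ P₂ = convexHull ℝ S := rfl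
  have hTF : coprod F₁ F₂ = convexHull ℝ T := rfl
  have hSle : ∀ p ∈ S, u p ≤ 0 := by
    rintro p (⟨x, hx, rfl⟩ | ⟨y, hy, rfl⟩)
    · simpa [huapp] using hle₁ x hx
    · simpa [huapp] using hle₂ y hy
  have hTzero : ∀ p ∈ T, u p = 0 := by
    rintro p (⟨x, hx, rfl⟩ | ⟨y, hy, rfl⟩)
    · have hx0 : u₁ x = 0 := (hF₁' ▸ hx).2
      simp [huapp, hx0]
    · have hy0 : u₂ y = 0 := (hF₂' ▸ hy).2
      simp [huapp, hy0]
  have hST : {p ∈ S | u p = 0} = T := by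
    ext p
    constructor
    · rintro ⟨(⟨x, hx, rfl⟩ | ⟨y, hy, rfl⟩), hp0⟩
      · exact Or.inl ⟨x, by rw [hF₁']; exact ⟨hx, by simpa [huapp] using hp0⟩, rfl⟩
      · exact Or.inr ⟨y, by rw [hF₂']; exact ⟨hy, by simpa [huapp] using hp0⟩, rfl⟩
    · intro hp
      refine ⟨?_, hTzero p hp⟩
      rcases hp with ⟨x, hx, rfl⟩ | ⟨y, hy, rfl⟩
      · exact Or.inl ⟨x, hF₁sub hx, rfl⟩
      · exact Or.inr ⟨y, hF₂sub hy, rfl⟩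
  have hcople : ∀ w ∈ coprod P₁ P₂, u w ≤ 0 := fun w hw =>
    convexHull_min hSle (convex_halfSpace_le u.isLinear 0) hw
  have h0cop : (0 : (Fin n₁ → ℝ) × (Fin n₂ → ℝ)) ∈ coprod F₁ F₂ :=
    subset_convexHull ℝ T (Or.inl ⟨0, hn0₁, rfl⟩)
  have hsub : coprod F₁ F₂ ⊆ coprod P₁ P₂ :=
    convexHull_mono (union_subset_union (image_mono hF₁sub) (image_mono hF₂sub))
  have h0cop' : (0 : (Fin n₁ → ℝ) × (Fin n₂ → ℝ)) ∈ coprod P₁ P₂ := hsub h0cop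
  have hcopT0 : ∀ z ∈ coprod F₁ F₂, u z = 0 := fun z hz =>
    convexHull_min (fun p hp => hTzero p hp) (convex_hyperplane u.isLinear 0) hz
  have hcopF : coprod F₁ F₂ = {z ∈ coprod P₁ P₂ | ∀ w ∈ coprod P₁ P₂, u w ≤ u z} := by
    ext z
    simp only [mem_setOf_eq]
    constructor
    · intro hz
      exact ⟨hsub hz, fun w hw => (hcopT0 z hz) ▸ hcople w hw⟩
    · rintro ⟨hz, hmax⟩
      have hz0 : u z = 0 := le_antisymm (hcople z hz) (by simpa using hmax 0 h0cop')
      have := mem_convexHull_zero_level hSle hz hz0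
      rwa [hST] at this
  refine ⟨Or.inr (Or.inr ⟨u, hcopF⟩), ?_⟩
  rw [adim_zero_mem h0cop, adim_zero_mem hn0₁, adim_zero_mem hn0₂]
  have hspan : Submodule.span ℝ (coprod F₁ F₂) =
      (Submodule.span ℝ F₁).prod (Submodule.span ℝ F₂) := by
    rw [hTF, span_convexHull]
    have h1 : (fun x => (x, (0 : Fin n₂ → ℝ))) =
        ⇑(LinearMap.inl ℝ (Fin n₁ → ℝ) (Fin n₂ → ℝ)) := rfl
    have h2 : (fun y => ((0 : Fin n₁ → ℝ), y)) =
        ⇑(LinearMap.inr ℝ (Fin n₁ → ℝ) (Fin n₂ → ℝ)) := rfl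
    rw [hTdef, h1, h2, LinearMap.span_inl_union_inr]
  rw [hspan, finrank_prod_submodule]
end

section
/- Let B₁ ⊆ ℝ^{n₁} and B₂ ⊆ ℝ^{n₂} be full-dimensional polytopes containing the respective origins, let Λ₁, Λ₂ be affine lattices of ranks n₁, n₂, and let 0 < μ < 1. If the interior of Bᵢ contains no point of Λᵢ for i = 1, 2, then the interior of B₁ ◇ B₂ contains no point of (1−μ)Λ₁ × μΛ₂. -/
open Set

/-- The affine lattice of rank `n` determined by a translation vector `v` and an
invertible matrix `M`: the image of `ℤⁿ` under `z ↦ v + M z`. -/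
def affLattice {n : ℕ} (v : Fin n → ℝ) (M : Matrix (Fin n) (Fin n) ℝ) : Set (Fin n → ℝ) :=
  {x | ∃ z : Fin n → ℤ, x = v + M.mulVec fun i => (z i : ℝ)}

open Filter Topology in
/-- If a continuous linear functional is `< c` on the interior of a convex set,
it is `≤ c` on the whole set (provided the interior is nonempty). -/
lemma aux_forall_le_of_lt_interior {E : Type*} [NormedAddCommGroup E] [NormedSpace ℝ E]
    {s : Set E} (hs : Convex ℝ s) {a : E} (ha : a ∈ interior s)
    (f : E →L[ℝ] ℝ) {c : ℝ} (h : ∀ y ∈ interior s, f y < c) :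
    ∀ x ∈ s, f x ≤ c := by
  intro x hx
  have ht : Tendsto (fun t : ℝ => f ((1 - t) • x + t • a)) (𝓝[>] 0) (𝓝 (f x)) := by
    have hcont : Continuous (fun t : ℝ => f ((1 - t) • x + t • a)) := by fun_prop
    have := hcont.tendsto 0
    simpa using this.mono_left nhdsWithin_le_nhds
  refine le_of_tendsto ht ?_
  filter_upwards [Ioo_mem_nhdsGT_of_mem (by norm_num : (0:ℝ) ∈ Ico (0:ℝ) 1)] with t ht'
  have hmem : (1 - t) • x + t • a ∈ interior s :=
    hs.combo_closure_interior_mem_interior (a := 1 - t) (b := t) (subset_closure hx) ha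
      (by linarith [ht'.2]) ht'.1 (by ring)
  exact (h _ hmem).le

open Filter Topology in
/-- A point where a nonzero continuous linear functional attains its maximum over `s`
cannot lie in the interior of `s`. -/
lemma aux_notMem_interior {E : Type*} [NormedAddCommGroup E] [NormedSpace ℝ E]
    {s : Set E} {p : E} (f : E →L[ℝ] ℝ) {w : E} (hw : 0 < f w)
    (h : ∀ x ∈ s, f x ≤ f p) : p ∉ interior s := by
  intro hp
  have ht : Tendsto (fun t : ℝ => p + t • w) (𝓝 0) (𝓝 p) := by
    have hcont : Continuous (fun t : ℝ => p + t • w) := by fun_prop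
    simpa using hcont.tendsto 0
  have h1 : ∀ᶠ t : ℝ in 𝓝 0, p + t • w ∈ s := ht (mem_interior_iff_mem_nhds.mp hp)
  obtain ⟨t, hts, ht0⟩ :=
    ((h1.filter_mono nhdsWithin_le_nhds).and (eventually_mem_nhdsWithin (s := Ioi (0:ℝ)))).exists
  have := h _ hts
  simp only [map_add, map_smul, smul_eq_mul] at this
  nlinarith [mem_Ioi.mp ht0]

lemma aux_coprod_le {n₁ n₂ : ℕ} {A : Set (Fin n₁ → ℝ)} {B : Set (Fin n₂ → ℝ)}
    (F : ((Fin n₁ → ℝ) × (Fin n₂ → ℝ)) →L[ℝ] ℝ) (c : ℝ)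
    (hA : ∀ x ∈ A, F (x, 0) ≤ c) (hB : ∀ y ∈ B, F (0, y) ≤ c) :
    ∀ q ∈ coprod A B, F q ≤ c := by
  intro q hq
  have hconv : Convex ℝ {w : (Fin n₁ → ℝ) × (Fin n₂ → ℝ) | F w ≤ c} :=
    convex_halfSpace_le ⟨F.map_add, F.map_smul⟩ c
  refine convexHull_min ?_ hconv hq
  rintro _ (⟨x, hx, rfl⟩ | ⟨y, hy, rfl⟩)
  · exact hA x hx
  · exact hB y hy

set_option maxHeartbeats 1000000 in
/-- If `B₁`, `B₂` are full-dimensional polytopes containing the respective origins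
which are `Λ₁`-free resp. `Λ₂`-free, then for `0 < μ < 1` the coproduct `B₁ ◇ B₂`
is `(1−μ)Λ₁ × μΛ₂`-free. -/
theorem stmt9 (n₁ n₂ : ℕ) (V₁ : Finset (Fin n₁ → ℝ)) (V₂ : Finset (Fin n₂ → ℝ))
    (v₁ : Fin n₁ → ℝ) (M₁ : Matrix (Fin n₁) (Fin n₁) ℝ) (hM₁ : M₁.det ≠ 0)
    (v₂ : Fin n₂ → ℝ) (M₂ : Matrix (Fin n₂) (Fin n₂) ℝ) (hM₂ : M₂.det ≠ 0)
    (h0₁ : (0 : Fin n₁ → ℝ) ∈ convexHull ℝ (V₁ : Set (Fin n₁ → ℝ)))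
    (h0₂ : (0 : Fin n₂ → ℝ) ∈ convexHull ℝ (V₂ : Set (Fin n₂ → ℝ)))
    (hd₁ : adim (convexHull ℝ (V₁ : Set (Fin n₁ → ℝ))) = n₁)
    (hd₂ : adim (convexHull ℝ (V₂ : Set (Fin n₂ → ℝ))) = n₂)
    (hfree₁ : interior (convexHull ℝ (V₁ : Set (Fin n₁ → ℝ))) ∩ affLattice v₁ M₁ = ∅)
    (hfree₂ : interior (convexHull ℝ (V₂ : Set (Fin n₂ → ℝ))) ∩ affLattice v₂ M₂ = ∅)
    (μ : ℝ) (hμ0 : 0 < μ) (hμ1 : μ < 1) :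
    interior (coprod (convexHull ℝ (V₁ : Set (Fin n₁ → ℝ)))
        (convexHull ℝ (V₂ : Set (Fin n₂ → ℝ)))) ∩
      {p : (Fin n₁ → ℝ) × (Fin n₂ → ℝ) |
        ∃ z₁ ∈ affLattice v₁ M₁, ∃ z₂ ∈ affLattice v₂ M₂,
          p = ((1 - μ) • z₁, μ • z₂)} = ∅ := by
  set B₁ : Set (Fin n₁ → ℝ) := convexHull ℝ (V₁ : Set (Fin n₁ → ℝ)) with hB₁def
  set B₂ : Set (Fin n₂ → ℝ) := convexHull ℝ (V₂ : Set (Fin n₂ → ℝ)) with hB₂def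
  rw [eq_empty_iff_forall_notMem]
  rintro p ⟨hpint, z₁, hz₁, z₂, hz₂, rfl⟩
  have hB₁conv : Convex ℝ B₁ := convex_convexHull ℝ _
  have hB₂conv : Convex ℝ B₂ := convex_convexHull ℝ _
  -- interiors are nonempty
  have hspan₁ : affineSpan ℝ B₁ = ⊤ := by
    have hne : ((affineSpan ℝ B₁ : AffineSubspace ℝ (Fin n₁ → ℝ)) : Set (Fin n₁ → ℝ)).Nonempty :=
      ⟨0, subset_affineSpan ℝ _ h0₁⟩
    rw [← AffineSubspace.direction_eq_top_iff_of_nonempty hne]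
    apply Submodule.eq_top_of_finrank_eq
    rw [Module.finrank_fin_fun]
    exact hd₁
  have hspan₂ : affineSpan ℝ B₂ = ⊤ := by
    have hne : ((affineSpan ℝ B₂ : AffineSubspace ℝ (Fin n₂ → ℝ)) : Set (Fin n₂ → ℝ)).Nonempty :=
      ⟨0, subset_affineSpan ℝ _ h0₂⟩
    rw [← AffineSubspace.direction_eq_top_iff_of_nonempty hne]
    apply Submodule.eq_top_of_finrank_eq
    rw [Module.finrank_fin_fun]
    exact hd₂
  obtain ⟨a₁, ha₁⟩ := hB₁conv.interior_nonempty_iff_affineSpan_eq_top.mpr hspan₁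
  obtain ⟨a₂, ha₂⟩ := hB₂conv.interior_nonempty_iff_affineSpan_eq_top.mpr hspan₂
  -- the lattice points are not interior
  have hz₁' : z₁ ∉ interior B₁ := fun h =>
    (eq_empty_iff_forall_notMem.mp hfree₁ z₁) ⟨h, hz₁⟩
  have hz₂' : z₂ ∉ interior B₂ := fun h =>
    (eq_empty_iff_forall_notMem.mp hfree₂ z₂) ⟨h, hz₂⟩
  -- separating functionals
  obtain ⟨f₁, hf₁⟩ := geometric_hahn_banach_open_point hB₁conv.interior isOpen_interior hz₁'
  obtain ⟨f₂, hf₂⟩ := geometric_hahn_banach_open_point hB₂conv.interior isOpen_interior hz₂'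
  have hle₁ : ∀ x ∈ B₁, f₁ x ≤ f₁ z₁ := aux_forall_le_of_lt_interior hB₁conv ha₁ f₁ hf₁
  have hle₂ : ∀ y ∈ B₂, f₂ y ≤ f₂ z₂ := aux_forall_le_of_lt_interior hB₂conv ha₂ f₂ hf₂
  have hα₁ : 0 ≤ f₁ z₁ := by simpa using hle₁ 0 h0₁
  have hα₂ : 0 ≤ f₂ z₂ := by simpa using hle₂ 0 h0₂
  set α₁ := f₁ z₁ with hα₁def
  set α₂ := f₂ z₂ with hα₂def
  -- nonzero directions
  have hw₁ : 0 < α₁ - f₁ a₁ := sub_pos.mpr (hf₁ a₁ ha₁)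
  have hw₂ : 0 < α₂ - f₂ a₂ := sub_pos.mpr (hf₂ a₂ ha₂)
  set E := (Fin n₁ → ℝ) × (Fin n₂ → ℝ)
  have fst1 : ((Fin n₁ → ℝ) × (Fin n₂ → ℝ)) →L[ℝ] (Fin n₁ → ℝ) :=
    ContinuousLinearMap.fst ℝ _ _
  rcases eq_or_lt_of_le hα₁ with h1 | h1
  · -- α₁ = 0 : use  F (x, y) = f₁ x
    set F : ((Fin n₁ → ℝ) × (Fin n₂ → ℝ)) →L[ℝ] ℝ :=
      f₁.comp (ContinuousLinearMap.fst ℝ _ _) with hFdef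
    have hFval : ∀ q : (Fin n₁ → ℝ) × (Fin n₂ → ℝ), F q = f₁ q.1 := fun q => rfl
    have hle : ∀ q ∈ coprod B₁ B₂, F q ≤ F ((1 - μ) • z₁, μ • z₂) := by
      have hc : F ((1 - μ) • z₁, μ • z₂) = 0 := by
        rw [hFval]; simp only [map_smul, smul_eq_mul]; rw [← hα₁def, ← h1]; ring
      rw [hc] at *
      refine aux_coprod_le F 0 ?_ ?_
      · intro x hx; rw [hFval]; simpa [← h1] using hle₁ x hx
      · intro y hy; rw [hFval]; simp
    have hwpos : 0 < F (z₁ - a₁, 0) := by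
      rw [hFval]; simpa [map_sub] using hw₁
    exact aux_notMem_interior F hwpos hle hpint
  · rcases eq_or_lt_of_le hα₂ with h2 | h2
    · -- α₂ = 0 : use  F (x, y) = f₂ y
      set F : ((Fin n₁ → ℝ) × (Fin n₂ → ℝ)) →L[ℝ] ℝ :=
        f₂.comp (ContinuousLinearMap.snd ℝ _ _) with hFdef
      have hFval : ∀ q : (Fin n₁ → ℝ) × (Fin n₂ → ℝ), F q = f₂ q.2 := fun q => rfl
      have hle : ∀ q ∈ coprod B₁ B₂, F q ≤ F ((1 - μ) • z₁, μ • z₂) := by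
        have hc : F ((1 - μ) • z₁, μ • z₂) = 0 := by
          rw [hFval]; simp only [map_smul, smul_eq_mul]; rw [← hα₂def, ← h2]; ring
        rw [hc] at *
        refine aux_coprod_le F 0 ?_ ?_
        · intro x hx; rw [hFval]; simp
        · intro y hy; rw [hFval]; simpa [← h2] using hle₂ y hy
      have hwpos : 0 < F (0, z₂ - a₂) := by
        rw [hFval]; simpa [map_sub] using hw₂
      exact aux_notMem_interior F hwpos hle hpint
    · -- both positive : use  F (x, y) = α₂ f₁ x + α₁ f₂ y
      set F : ((Fin n₁ → ℝ) × (Fin n₂ → ℝ)) →L[ℝ] ℝ :=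
        α₂ • f₁.comp (ContinuousLinearMap.fst ℝ _ _)
          + α₁ • f₂.comp (ContinuousLinearMap.snd ℝ _ _) with hFdef
      have hFval : ∀ q : (Fin n₁ → ℝ) × (Fin n₂ → ℝ),
          F q = α₂ * f₁ q.1 + α₁ * f₂ q.2 := fun q => by
        rw [hFdef]
        simp [ContinuousLinearMap.add_apply, ContinuousLinearMap.smul_apply,
          ContinuousLinearMap.comp_apply, smul_eq_mul]
      have hc : F ((1 - μ) • z₁, μ • z₂) = α₁ * α₂ := by
        rw [hFval]; simp only [map_smul, smul_eq_mul]; ring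
      have hle : ∀ q ∈ coprod B₁ B₂, F q ≤ F ((1 - μ) • z₁, μ • z₂) := by
        rw [hc] at *
        refine aux_coprod_le F (α₁ * α₂) ?_ ?_
        · intro x hx; rw [hFval]
          have := hle₁ x hx
          simp only [map_zero, add_zero, mul_zero]
          nlinarith
        · intro y hy; rw [hFval]
          have := hle₂ y hy
          simp only [map_zero, zero_add, mul_zero]
          nlinarith
      have hwpos : 0 < F (z₁ - a₁, 0) := by
        rw [hFval]; simp only [map_sub, map_zero, mul_zero, add_zero]
        nlinarith
      exact aux_notMem_interior F hwpos hle hpint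
end

section
/- Let n ≥ 1 and let a₁, ..., aₙ > 0 satisfy 1/a₁ + ⋯ + 1/aₙ = 1. Then the cross-polytope conv{±(a₁/2)e₁, ..., ±(aₙ/2)eₙ} + (1/2, ..., 1/2) is lattice-free, i.e., its interior contains no point of ℤⁿ. -/
open Set

/-- If `a₁,…,aₙ > 0` and `1/a₁ + ⋯ + 1/aₙ = 1`, the cross-polytope
`conv{±(a₁/2)e₁, …, ±(aₙ/2)eₙ} + (1/2,…,1/2)` is lattice-free: its interior
contains no integer point. -/
theorem stmt11 (n : ℕ) (hn : 1 ≤ n) (a : Fin n → ℝ) (ha : ∀ i, 0 < a i)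
    (hsum : ∑ i, (a i)⁻¹ = 1) :
    interior ((fun x => x + fun _ => (1 / 2 : ℝ)) ''
        convexHull ℝ
          {p : Fin n → ℝ | ∃ i, (p = fun j => if j = i then a i / 2 else 0) ∨
            p = fun j => if j = i then -(a i / 2) else 0}) ∩
      {x : Fin n → ℝ | ∀ j, ∃ m : ℤ, x j = (m : ℝ)} = ∅ := by
  set c : Fin n → ℝ := fun _ => (1 / 2 : ℝ) with hc
  set f : (Fin n → ℝ) → ℝ := fun y => ∑ i, 2 * |y i| * (a i)⁻¹ with hf
  set K : Set (Fin n → ℝ) := {y | f y ≤ 1} with hKdef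
  set S : Set (Fin n → ℝ) :=
    {p : Fin n → ℝ | ∃ i, (p = fun j => if j = i then a i / 2 else 0) ∨
      p = fun j => if j = i then -(a i / 2) else 0} with hS
  -- K is convex
  have hKconv : Convex ℝ K := by
    intro y hy z hz t s ht hs hts
    simp only [hKdef, hf, mem_setOf_eq] at hy hz ⊢
    have key : ∀ i ∈ Finset.univ (α := Fin n),
        2 * |(t • y + s • z) i| * (a i)⁻¹
          ≤ t * (2 * |y i| * (a i)⁻¹) + s * (2 * |z i| * (a i)⁻¹) := by
      intro i _
      have hinv : (0:ℝ) ≤ (a i)⁻¹ := (inv_pos.2 (ha i)).le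
      have habs : |(t • y + s • z) i| ≤ t * |y i| + s * |z i| := by
        simp only [Pi.add_apply, Pi.smul_apply, smul_eq_mul]
        calc |t * y i + s * z i| ≤ |t * y i| + |s * z i| := abs_add_le _ _
          _ = t * |y i| + s * |z i| := by
              rw [abs_mul, abs_mul, abs_of_nonneg ht, abs_of_nonneg hs]
      nlinarith [habs, hinv]
    calc ∑ i, 2 * |(t • y + s • z) i| * (a i)⁻¹
        ≤ ∑ i, (t * (2 * |y i| * (a i)⁻¹) + s * (2 * |z i| * (a i)⁻¹)) :=
          Finset.sum_le_sum key
      _ = t * (∑ i, 2 * |y i| * (a i)⁻¹) + s * (∑ i, 2 * |z i| * (a i)⁻¹) := by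
          rw [Finset.sum_add_distrib, Finset.mul_sum, Finset.mul_sum]
      _ ≤ t * 1 + s * 1 := by
          have h1 := mul_le_mul_of_nonneg_left hy ht
          have h2 := mul_le_mul_of_nonneg_left hz hs
          linarith
      _ = 1 := by linarith
  -- S ⊆ K
  have hSK : S ⊆ K := by
    rintro p ⟨i, hp | hp⟩ <;> subst hp
    · simp only [hKdef, hf, mem_setOf_eq]
      have hterm : ∀ j ∈ Finset.univ (α := Fin n),
          2 * |(if j = i then a i / 2 else 0 : ℝ)| * (a j)⁻¹
            = (if j = i then (1:ℝ) else 0) := by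
        intro j _
        split_ifs with h
        · subst h
          have h0 : a j ≠ 0 := (ha j).ne'
          rw [abs_of_nonneg (div_nonneg (ha _).le (by norm_num))]
          field_simp
        · simp
      rw [Finset.sum_congr rfl hterm, Finset.sum_ite_eq']
      simp
    · simp only [hKdef, hf, mem_setOf_eq]
      have hterm : ∀ j ∈ Finset.univ (α := Fin n),
          2 * |(if j = i then -(a i / 2) else 0 : ℝ)| * (a j)⁻¹
            = (if j = i then (1:ℝ) else 0) := by
        intro j _
        split_ifs with h
        · subst h
          have h0 : a j ≠ 0 := (ha j).ne'
          rw [abs_neg, abs_of_nonneg (div_nonneg (ha _).le (by norm_num))]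
          field_simp
        · simp
      rw [Finset.sum_congr rfl hterm, Finset.sum_ite_eq']
      simp
  have hhull : convexHull ℝ S ⊆ K := convexHull_min hSK hKconv
  -- main argument
  rw [eq_empty_iff_forall_notMem]
  rintro x ⟨hx, hint⟩
  have himg : interior ((fun x => x + c) '' convexHull ℝ S)
      = (fun x => x + c) '' interior (convexHull ℝ S) :=
    ((Homeomorph.addRight c).image_interior _).symm
  rw [himg] at hx
  obtain ⟨y, hy, rfl⟩ := hx
  have hyK : y ∈ interior K := interior_mono hhull hy
  -- each coordinate of y has absolute value ≥ 1/2
  have habs : ∀ j, (1/2 : ℝ) ≤ |y j| := by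
    intro j
    obtain ⟨m, hm⟩ := hint j
    have hyj : y j = (m : ℝ) - 1/2 := by
      have : y j + 1/2 = (m : ℝ) := hm
      linarith
    rw [hyj]
    rcases le_or_gt m 0 with h | h
    · have : (m : ℝ) ≤ 0 := by exact_mod_cast h
      rw [abs_of_nonpos (by linarith)]; linarith
    · have : (1 : ℝ) ≤ (m : ℝ) := by exact_mod_cast h
      rw [abs_of_nonneg (by linarith)]; linarith
  have hfy : 1 ≤ f y := by
    have : ∀ i ∈ Finset.univ (α := Fin n), (a i)⁻¹ ≤ 2 * |y i| * (a i)⁻¹ := by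
      intro i _
      have hinv : (0:ℝ) ≤ (a i)⁻¹ := (inv_pos.2 (ha i)).le
      nlinarith [habs i, hinv]
    calc (1:ℝ) = ∑ i, (a i)⁻¹ := hsum.symm
      _ ≤ ∑ i, 2 * |y i| * (a i)⁻¹ := Finset.sum_le_sum this
  -- get a ball inside K
  rw [mem_interior_iff_mem_nhds, Metric.mem_nhds_iff] at hyK
  obtain ⟨ε, hε, hball⟩ := hyK
  have hny : (1/2 : ℝ) ≤ ‖y‖ := le_trans (habs ⟨0, hn⟩)
    (by simpa using norm_le_pi_norm y ⟨0, hn⟩)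
  have hnypos : (0:ℝ) < ‖y‖ := lt_of_lt_of_le (by norm_num) hny
  set δ : ℝ := ε / (2 * ‖y‖) with hδ
  have hδpos : 0 < δ := div_pos hε (by positivity)
  have hmem : (1 + δ) • y ∈ Metric.ball y ε := by
    rw [Metric.mem_ball, dist_eq_norm]
    have : (1 + δ) • y - y = δ • y := by
      rw [add_smul, one_smul]; abel
    rw [this, norm_smul, Real.norm_eq_abs, abs_of_pos hδpos, hδ]
    rw [div_mul_eq_mul_div]
    rw [div_lt_iff₀ (by positivity)]
    nlinarith [hnypos, hε]
  have hK' : f ((1 + δ) • y) ≤ 1 := hball hmem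
  have hfy' : f ((1 + δ) • y) = (1 + δ) * f y := by
    simp only [hf]
    rw [Finset.mul_sum]
    apply Finset.sum_congr rfl
    intro i _
    have : |((1 + δ) • y) i| = (1 + δ) * |y i| := by
      simp only [Pi.smul_apply, smul_eq_mul, abs_mul,
        abs_of_pos (by linarith : (0:ℝ) < 1 + δ)]
    rw [this]; ring
  rw [hfy'] at hK'
  nlinarith [hδpos, hfy, hK']
end

section
/- Let n ≥ 3 and let V be a finite subset of ℝⁿ spanning ℝⁿ such that every belt of the zonotope Z(V) consists of exactly four facets. Then Z(V) is the image of the cube [−1,1]ⁿ under an invertible linear transformation. -/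
/-!
Every face of a zonotope is a translate of the zonotope of the generators parallel to it: the
face maximizing `u` is `∑ sign (u v) • v + Z(V ∩ ker u)`. Choose a basis `B` of `ℝⁿ` among the
generators. If every generator is parallel to some `B i`, then `Z(V)` is the parallelotope with
edges `m i • B i`, where `m i` is the total length of the generators along `B i`. Otherwise some
generator has two nonzero coordinates `a₁, a₂` (at `i₁, i₂`). For generic `α` the face `G`
maximizing `α x_{i₁} + x_{i₂}` is spanned by the generators with vanishing `i₁`- and
`i₂`-coordinates, so it has dimension `n - 2`, and the six facets maximizing `±x_{i₁}`, `±x_{i₂}`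
and `±(a₂ x_{i₁} - a₁ x_{i₂})` all contain a translate of `G`.
-/

open Set

/-- The zonotope generated by a finite set of vectors `V`. -/
def zono {n : ℕ} (V : Finset (Fin n → ℝ)) : Set (Fin n → ℝ) :=
  {x | ∃ l : (Fin n → ℝ) → ℝ, (∀ v ∈ V, l v ∈ Icc (-1 : ℝ) 1) ∧ x = ∑ v ∈ V, l v • v}

/-- The belt of an `(n−2)`-dimensional face `G` of a polytope `P ⊆ ℝⁿ`: the set of
facets of `P` containing a translate of `G` or of `−G`. -/
def belt {n : ℕ} (P G : Set (Fin n → ℝ)) : Set (Set (Fin n → ℝ)) :=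
  {F | IsFace P F ∧ F.Nonempty ∧ adim F = n - 1 ∧
    ∃ t : Fin n → ℝ, ((fun x => t + x) '' G ⊆ F ∨ (fun x => t + -x) '' G ⊆ F)}

lemma eq_sign_of_mul_eq_abs {l a : ℝ} (h : l * a = |a|) (ha : a ≠ 0) : l = SignType.sign a := by
  have : (l - SignType.sign a) * a = 0 := by rw [sub_mul, h, sign_mul_self, sub_self]
  exact sub_eq_zero.mp ((mul_eq_zero.mp this).resolve_right ha)

lemma abs_sign_le_one (a : ℝ) : |(SignType.sign a : ℝ)| ≤ 1 := by
  rcases SignType.trichotomy (SignType.sign a) with h | h | h <;> simp [h]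

lemma eq_sign_of_sum_mul_eq_sum_abs {ι : Type*} {s : Finset ι} {l a : ι → ℝ}
    (hl : ∀ i ∈ s, |l i| ≤ 1) (h : ∑ i ∈ s, l i * a i = ∑ i ∈ s, |a i|) {i : ι} (hi : i ∈ s)
    (hai : a i ≠ 0) : l i = SignType.sign (a i) := by
  have hle : ∀ j ∈ s, l j * a j ≤ |a j| := fun j hj =>
    calc l j * a j ≤ |l j| * |a j| := by rw [← abs_mul]; exact le_abs_self _
      _ ≤ |a j| := mul_le_of_le_one_left (abs_nonneg _) (hl j hj)
  exact eq_sign_of_mul_eq_abs ((Finset.sum_eq_sum_iff_of_le hle).mp h i hi) hai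

lemma SignType.coe_real_injective : Function.Injective ((↑) : SignType → ℝ) := by
  intro a b h
  cases a <;> cases b <;> first | rfl | norm_num at h

section Zonotope

open scoped Pointwise

variable {n : ℕ}

lemma zero_mem_zono (V : Finset (Fin n → ℝ)) : (0 : Fin n → ℝ) ∈ zono V :=
  ⟨0, fun _ _ => by simp, by simp⟩

lemma mem_zono_of_mem {V : Finset (Fin n → ℝ)} {v : Fin n → ℝ} (hv : v ∈ V) : v ∈ zono V := by
  refine ⟨Pi.single v 1, fun w _ => ?_, ?_⟩
  · rcases eq_or_ne w v with rfl | h <;> simp [*]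
  · rw [Finset.sum_eq_single_of_mem v hv fun w _ h => by simp [h]]
    simp

lemma zono_mono {S T : Finset (Fin n → ℝ)} (h : S ⊆ T) : zono S ⊆ zono T := by
  rintro x ⟨l, hl, rfl⟩
  refine ⟨fun v => if v ∈ S then l v else 0, fun v _ => ?_, ?_⟩
  · by_cases hv : v ∈ S <;> simp [hv, hl v]
  · rw [← Finset.sum_subset h fun v _ hv => by simp [hv]]
    exact Finset.sum_congr rfl fun v hv => by simp [hv]

lemma zono_subset_span (V : Finset (Fin n → ℝ)) :
    zono V ⊆ (Submodule.span ℝ (V : Set (Fin n → ℝ)) : Set (Fin n → ℝ)) := by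
  rintro x ⟨l, -, rfl⟩
  exact Submodule.sum_mem _ fun v hv => Submodule.smul_mem _ _ (Submodule.subset_span hv)

lemma vectorSpan_zono (V : Finset (Fin n → ℝ)) :
    vectorSpan ℝ (zono V) = Submodule.span ℝ (V : Set _) := by
  rw [vectorSpan_eq_span_vsub_set_right ℝ (zero_mem_zono V)]
  simp only [vsub_eq_sub, sub_zero, Set.image_id']
  exact le_antisymm (Submodule.span_le.mpr (zono_subset_span V))
    (Submodule.span_mono fun v hv => mem_zono_of_mem hv)

lemma apply_le_of_mem_zono (u : (Fin n → ℝ) →ₗ[ℝ] ℝ) {V : Finset (Fin n → ℝ)} {y : Fin n → ℝ}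
    (hy : y ∈ zono V) : u y ≤ ∑ v ∈ V, |u v| := by
  obtain ⟨l, hl, rfl⟩ := hy
  simp only [map_sum, map_smul, smul_eq_mul]
  refine Finset.sum_le_sum fun v hv => ?_
  calc l v * u v ≤ |l v| * |u v| := by rw [← abs_mul]; exact le_abs_self _
    _ ≤ |u v| := mul_le_of_le_one_left (abs_nonneg _) (abs_le.mpr (hl v hv))

noncomputable def signSum (u : (Fin n → ℝ) →ₗ[ℝ] ℝ) (V : Finset (Fin n → ℝ)) : Fin n → ℝ :=
  ∑ v ∈ V, (SignType.sign (u v) : ℝ) • v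

lemma signSum_mem_zono (u : (Fin n → ℝ) →ₗ[ℝ] ℝ) (V : Finset (Fin n → ℝ)) :
    signSum u V ∈ zono V :=
  ⟨fun v => SignType.sign (u v), fun _ _ => abs_le.mp (abs_sign_le_one _), rfl⟩

lemma apply_signSum (u : (Fin n → ℝ) →ₗ[ℝ] ℝ) (V : Finset (Fin n → ℝ)) :
    u (signSum u V) = ∑ v ∈ V, |u v| := by
  simp only [signSum, map_sum, map_smul, smul_eq_mul, sign_mul_self]

lemma sum_smul_eq_signSum_add (u : (Fin n → ℝ) →ₗ[ℝ] ℝ) {V : Finset (Fin n → ℝ)}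
    {l : (Fin n → ℝ) → ℝ} (hl : ∀ v ∈ V, u v ≠ 0 → l v = SignType.sign (u v)) :
    ∑ v ∈ V, l v • v = signSum u V + ∑ v ∈ V.filter (u · = 0), l v • v := by
  have h₀ : ∑ v ∈ V.filter (u · = 0), (SignType.sign (u v) : ℝ) • v = 0 :=
    Finset.sum_eq_zero fun v hv => by simp [(Finset.mem_filter.mp hv).2]
  have h₁ : ∑ v ∈ V.filter (¬u · = 0), (SignType.sign (u v) : ℝ) • v
      = ∑ v ∈ V.filter (¬u · = 0), l v • v :=
    Finset.sum_congr rfl fun v hv => by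
      rw [hl v (Finset.mem_filter.mp hv).1 (Finset.mem_filter.mp hv).2]
  rw [signSum, ← Finset.sum_filter_add_sum_filter_not V (u · = 0)
    (fun v => (SignType.sign (u v) : ℝ) • v), h₀, zero_add, h₁, add_comm,
    Finset.sum_filter_add_sum_filter_not]

def faceDirection (u : (Fin n → ℝ) →ₗ[ℝ] ℝ) (V : Finset (Fin n → ℝ)) :
    Submodule ℝ (Fin n → ℝ) :=
  Submodule.span ℝ ((V.filter (u · = 0) : Finset (Fin n → ℝ)) : Set (Fin n → ℝ))

def zonoFace (u : (Fin n → ℝ) →ₗ[ℝ] ℝ) (V : Finset (Fin n → ℝ)) : Set (Fin n → ℝ) :=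
  {x ∈ zono V | ∀ y ∈ zono V, u y ≤ u x}

lemma isFace_zonoFace (u : (Fin n → ℝ) →ₗ[ℝ] ℝ) (V : Finset (Fin n → ℝ)) :
    IsFace (zono V) (zonoFace u V) :=
  Or.inr (Or.inr ⟨u, rfl⟩)

lemma mem_zonoFace_iff {u : (Fin n → ℝ) →ₗ[ℝ] ℝ} {V : Finset (Fin n → ℝ)} {x : Fin n → ℝ} :
    x ∈ zonoFace u V ↔ x ∈ zono V ∧ u x = ∑ v ∈ V, |u v| := by
  refine ⟨fun hx => ⟨hx.1, le_antisymm (apply_le_of_mem_zono u hx.1) ?_⟩,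
    fun hx => ⟨hx.1, fun y hy => hx.2 ▸ apply_le_of_mem_zono u hy⟩⟩
  simpa [apply_signSum] using hx.2 _ (signSum_mem_zono u V)

lemma signSum_mem_zonoFace (u : (Fin n → ℝ) →ₗ[ℝ] ℝ) (V : Finset (Fin n → ℝ)) :
    signSum u V ∈ zonoFace u V :=
  mem_zonoFace_iff.mpr ⟨signSum_mem_zono u V, apply_signSum u V⟩

lemma zonoFace_eq_vadd (u : (Fin n → ℝ) →ₗ[ℝ] ℝ) (V : Finset (Fin n → ℝ)) :
    zonoFace u V = signSum u V +ᵥ zono (V.filter (u · = 0)) := by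
  ext x
  rw [mem_zonoFace_iff, Set.mem_vadd_set]
  constructor
  · rintro ⟨⟨l, hl, rfl⟩, hx⟩
    have hsign : ∀ v ∈ V, u v ≠ 0 → l v = SignType.sign (u v) := fun _ =>
      eq_sign_of_sum_mul_eq_sum_abs (fun v hv => abs_le.mpr (hl v hv))
        (by simpa only [map_sum, map_smul, smul_eq_mul] using hx)
    exact ⟨_, ⟨l, fun v hv => hl v (Finset.mem_filter.mp hv).1, rfl⟩,
      (sum_smul_eq_signSum_add u hsign).symm⟩
  · rintro ⟨_, ⟨m, hm, rfl⟩, rfl⟩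
    set l : (Fin n → ℝ) → ℝ := fun v => if u v = 0 then m v else SignType.sign (u v)
    have hsum : ∑ v ∈ V, l v • v = signSum u V + ∑ v ∈ V.filter (u · = 0), m v • v := by
      rw [sum_smul_eq_signSum_add u fun v _ hv => if_neg hv]
      exact congrArg _ (Finset.sum_congr rfl fun v hv => by simp [(Finset.mem_filter.mp hv).2])
    have hker : u (∑ v ∈ V.filter (u · = 0), m v • v) = 0 := by
      simp only [map_sum, map_smul, smul_eq_mul]
      exact Finset.sum_eq_zero fun v hv => by rw [(Finset.mem_filter.mp hv).2, mul_zero]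
    refine ⟨⟨l, fun v hv => ?_, hsum.symm⟩,
      by rw [vadd_eq_add, map_add, hker, add_zero, apply_signSum]⟩
    by_cases h : u v = 0
    · simpa [l, h] using hm v (Finset.mem_filter.mpr ⟨hv, h⟩)
    · simpa [l, h] using abs_le.mp (abs_sign_le_one (u v))

lemma direction_zonoFace (u : (Fin n → ℝ) →ₗ[ℝ] ℝ) (V : Finset (Fin n → ℝ)) :
    (affineSpan ℝ (zonoFace u V)).direction = faceDirection u V := by
  rw [direction_affineSpan, zonoFace_eq_vadd, vectorSpan_vadd, vectorSpan_zono, faceDirection]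

lemma adim_zonoFace (u : (Fin n → ℝ) →ₗ[ℝ] ℝ) (V : Finset (Fin n → ℝ)) :
    adim (zonoFace u V) = Module.finrank ℝ (faceDirection u V) := by
  rw [adim, direction_zonoFace]

lemma sign_eq_of_zonoFace_eq_of_ne_zero {u w : (Fin n → ℝ) →ₗ[ℝ] ℝ} {V : Finset (Fin n → ℝ)}
    (h : zonoFace u V = zonoFace w V) {v : Fin n → ℝ} (hv : v ∈ V) (hw : w v ≠ 0) :
    SignType.sign (u v) = SignType.sign (w v) := by
  have hmem := (mem_zonoFace_iff.mp (h ▸ signSum_mem_zonoFace u V)).2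
  simp only [signSum, map_sum, map_smul, smul_eq_mul] at hmem
  exact SignType.coe_real_injective <|
    eq_sign_of_sum_mul_eq_sum_abs (fun v _ => abs_sign_le_one (u v)) hmem hv hw

lemma sign_eq_of_zonoFace_eq {u w : (Fin n → ℝ) →ₗ[ℝ] ℝ} {V : Finset (Fin n → ℝ)}
    (h : zonoFace u V = zonoFace w V) {v : Fin n → ℝ} (hv : v ∈ V) :
    SignType.sign (u v) = SignType.sign (w v) := by
  by_cases hw : w v = 0
  · by_cases hu : u v = 0
    · rw [hu, hw]
    · exact (sign_eq_of_zonoFace_eq_of_ne_zero h.symm hv hu).symm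
  · exact sign_eq_of_zonoFace_eq_of_ne_zero h hv hw

lemma zonoFace_mem_belt {u w : (Fin n → ℝ) →ₗ[ℝ] ℝ} {V : Finset (Fin n → ℝ)} {z : Fin n → ℝ}
    (hK : Module.finrank ℝ (faceDirection u V) = n - 2)
    (hw : w ≠ 0) (huw : ∀ v ∈ V, u v = 0 → w v = 0) (hz : z ∈ V) (hwz : w z = 0)
    (hzK : z ∉ faceDirection u V) :
    zonoFace w V ∈ belt (zono V) (zonoFace u V) := by
  have hfilter : V.filter (u · = 0) ⊆ V.filter (w · = 0) := fun v hv => by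
    rw [Finset.mem_filter] at hv ⊢
    exact ⟨hv.1, huw v hv.1 hv.2⟩
  refine ⟨isFace_zonoFace w V, ⟨_, signSum_mem_zonoFace w V⟩, ?_,
    signSum w V - signSum u V, Or.inl ?_⟩
  · have hlower : faceDirection u V ⊔ Submodule.span ℝ {z} ≤ faceDirection w V :=
      sup_le (Submodule.span_mono (Finset.coe_subset.mpr hfilter))
        (Submodule.span_mono (Set.singleton_subset_iff.mpr (Finset.mem_filter.mpr ⟨hz, hwz⟩)))
    have hupper : faceDirection w V ≤ LinearMap.ker w :=
      Submodule.span_le.mpr fun v hv => (Finset.mem_filter.mp hv).2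
    replace hlower := Submodule.finrank_mono hlower
    replace hupper := Submodule.finrank_mono hupper
    have hker := Module.Dual.finrank_ker_add_one_of_ne_zero hw
    rw [Submodule.finrank_sup_span_singleton hzK, hK] at hlower
    rw [Module.finrank_fin_fun] at hker
    rw [adim_zonoFace]
    omega
  · rw [zonoFace_eq_vadd, zonoFace_eq_vadd]
    rintro _ ⟨_, ⟨x, hx, rfl⟩, rfl⟩
    exact ⟨x, zono_mono hfilter hx, by simp only [vadd_eq_add]; abel⟩

end Zonotope

lemma exists_forall_mul_add_eq_zero {E : Type*} (f g : E → ℝ) (s : Finset E) :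
    ∃ α : ℝ, ∀ v ∈ s, α * f v + g v = 0 → f v = 0 ∧ g v = 0 := by
  obtain ⟨α, hα⟩ := Infinite.exists_notMem_finset (s.image fun v => -g v / f v)
  refine ⟨α, fun v hv h => ?_⟩
  by_cases hf : f v = 0
  · exact ⟨hf, by simpa [hf] using h⟩
  · exact absurd (Finset.mem_image.mpr ⟨v, hv, by field_simp; linarith⟩) hα

lemma exists_basis_subset {n : ℕ} {V : Finset (Fin n → ℝ)}
    (hspan : Submodule.span ℝ (V : Set (Fin n → ℝ)) = ⊤) :
    ∃ B : Module.Basis (Fin n) ℝ (Fin n → ℝ), ∀ i, B i ∈ V := by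
  let B₀ := Module.Basis.ofSpan hspan.ge
  refine ⟨B₀.reindex (B₀.indexEquiv (Pi.basisFun ℝ (Fin n))), fun i => ?_⟩
  rw [Module.Basis.reindex_apply]
  exact Module.Basis.ofSpan_subset hspan.ge ⟨_, rfl⟩

lemma Module.Basis.exists_repr_ne_zero_of_forall_ne_smul {ι R M : Type*} [Semiring R]
    [AddCommMonoid M] [Module R M] [Nonempty ι] (B : Module.Basis ι R M) {v : M}
    (hv : ∀ i (c : R), v ≠ c • B i) :
    ∃ i₁ i₂, i₁ ≠ i₂ ∧ B.repr v i₁ ≠ 0 ∧ B.repr v i₂ ≠ 0 := by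
  by_contra! h
  obtain ⟨i₁, hi₁⟩ : ∃ i, B.repr v i ≠ 0 := by
    by_contra! h0
    obtain ⟨i⟩ := ‹Nonempty ι›
    exact hv i 0 (by rw [zero_smul, ← B.repr.map_eq_zero_iff]; ext j; exact h0 j)
  refine hv i₁ (B.repr v i₁) (B.repr.injective ?_)
  ext j
  rcases eq_or_ne i₁ j with rfl | hj
  · simp
  · simp [h i₁ j hj hi₁, hj]

lemma Module.Basis.finrank_span_image_finset {ι K M : Type*} [DivisionRing K] [AddCommGroup M]
    [Module K M] (B : Module.Basis ι K M) (s : Finset ι) :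
    Module.finrank K (Submodule.span K (B '' s)) = s.card := by
  have hrange : B '' s = Set.range (B ∘ ((↑) : s → ι)) := by
    rw [Set.range_comp, Subtype.range_coe]
  rw [hrange, finrank_span_eq_card (B.linearIndependent.comp _ Subtype.val_injective),
    Fintype.card_coe]

lemma faceDirection_eq_span_image {n : ℕ} {ι : Type*} {V : Finset (Fin n → ℝ)}
    (B : Module.Basis ι ℝ (Fin n → ℝ)) (hB : ∀ i, B i ∈ V) (u : (Fin n → ℝ) →ₗ[ℝ] ℝ) (s : Set ι)
    (hu : ∀ v ∈ V, u v = 0 → ↑(B.repr v).support ⊆ s) (huB : ∀ j ∈ s, u (B j) = 0) :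
    faceDirection u V = Submodule.span ℝ (B '' s) := by
  refine le_antisymm (Submodule.span_le.mpr fun v hv => ?_) (Submodule.span_mono ?_)
  · rw [Finset.mem_coe, Finset.mem_filter] at hv
    exact B.mem_span_image.mpr (hu v hv.1 hv.2)
  · rintro _ ⟨j, hj, rfl⟩
    exact Finset.mem_filter.mpr ⟨hB j, huB j hj⟩

section CoordComb

variable {n : ℕ} (B : Module.Basis (Fin n) ℝ (Fin n → ℝ)) (i₁ i₂ : Fin n)

noncomputable def coordComb (a b : ℝ) : (Fin n → ℝ) →ₗ[ℝ] ℝ :=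
  a • B.coord i₁ + b • B.coord i₂

variable {B i₁ i₂}

lemma coordComb_apply (a b : ℝ) (x : Fin n → ℝ) :
    coordComb B i₁ i₂ a b x = a * B.repr x i₁ + b * B.repr x i₂ := by
  simp [coordComb]

lemma coordComb_apply_left (hi : i₁ ≠ i₂) (a b : ℝ) : coordComb B i₁ i₂ a b (B i₁) = a := by
  simp [coordComb_apply, hi]

lemma coordComb_apply_right (hi : i₁ ≠ i₂) (a b : ℝ) : coordComb B i₁ i₂ a b (B i₂) = b := by
  simp [coordComb_apply, hi]

lemma coordComb_ne_zero (hi : i₁ ≠ i₂) {a b : ℝ} (hab : a ≠ 0 ∨ b ≠ 0) :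
    coordComb B i₁ i₂ a b ≠ 0 := by
  intro h
  rcases hab with ha | hb
  · exact ha (by simpa [h] using (coordComb_apply_left (B := B) hi a b).symm)
  · exact hb (by simpa [h] using (coordComb_apply_right (B := B) hi a b).symm)

lemma sign_eq_of_zonoFace_coordComb_eq {V : Finset (Fin n → ℝ)} (hB : ∀ i, B i ∈ V)
    (hi : i₁ ≠ i₂) {a b a' b' : ℝ}
    (h : zonoFace (coordComb B i₁ i₂ a b) V = zonoFace (coordComb B i₁ i₂ a' b') V) :
    (SignType.sign a, SignType.sign b) = (SignType.sign a', SignType.sign b') := by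
  have h₁ := sign_eq_of_zonoFace_eq h (hB i₁)
  have h₂ := sign_eq_of_zonoFace_eq h (hB i₂)
  simp only [coordComb_apply_left hi, coordComb_apply_right hi] at h₁ h₂
  rw [h₁, h₂]

end CoordComb

section GenericFace

variable {n : ℕ} {V : Finset (Fin n → ℝ)} {B : Module.Basis (Fin n) ℝ (Fin n → ℝ)}
  {i₁ i₂ : Fin n} {α : ℝ}

lemma faceDirection_coordComb_eq (hB : ∀ i, B i ∈ V)
    (hα : ∀ v ∈ V, α * B.repr v i₁ + B.repr v i₂ = 0 → B.repr v i₁ = 0 ∧ B.repr v i₂ = 0) :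
    faceDirection (coordComb B i₁ i₂ α 1) V
      = Submodule.span ℝ (B '' ↑({i₁, i₂}ᶜ : Finset (Fin n))) := by
  refine faceDirection_eq_span_image B hB _ _ (fun v hv huv j hj => ?_) (fun j hj => ?_)
  · obtain ⟨hv₁, hv₂⟩ := hα v hv (by simpa [coordComb_apply] using huv)
    rw [Finset.mem_coe, Finsupp.mem_support_iff] at hj
    simp only [Finset.coe_compl, Finset.coe_pair, Set.mem_compl_iff, Set.mem_insert_iff,
      Set.mem_singleton_iff, not_or]
    exact ⟨fun h => hj (h ▸ hv₁), fun h => hj (h ▸ hv₂)⟩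
  · simp only [Finset.coe_compl, Finset.coe_pair, Set.mem_compl_iff, Set.mem_insert_iff,
      Set.mem_singleton_iff, not_or] at hj
    simp [coordComb_apply, Ne.symm hj.1, Ne.symm hj.2]

lemma finrank_faceDirection_coordComb (hB : ∀ i, B i ∈ V) (hi : i₁ ≠ i₂)
    (hα : ∀ v ∈ V, α * B.repr v i₁ + B.repr v i₂ = 0 → B.repr v i₁ = 0 ∧ B.repr v i₂ = 0) :
    Module.finrank ℝ (faceDirection (coordComb B i₁ i₂ α 1) V) = n - 2 := by
  rw [faceDirection_coordComb_eq hB hα, B.finrank_span_image_finset, Finset.card_compl,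
    Finset.card_pair hi, Fintype.card_fin]

lemma notMem_faceDirection_coordComb (hB : ∀ i, B i ∈ V)
    (hα : ∀ v ∈ V, α * B.repr v i₁ + B.repr v i₂ = 0 → B.repr v i₁ = 0 ∧ B.repr v i₂ = 0)
    {z : Fin n → ℝ} (hz : B.repr z i₁ ≠ 0 ∨ B.repr z i₂ ≠ 0) :
    z ∉ faceDirection (coordComb B i₁ i₂ α 1) V := by
  rw [faceDirection_coordComb_eq hB hα, B.mem_span_image]
  intro hsupp
  rcases hz with hz | hz
  · simpa using hsupp (Finsupp.mem_support_iff.mpr hz)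
  · simpa using hsupp (Finsupp.mem_support_iff.mpr hz)

lemma zonoFace_coordComb_mem_belt (hB : ∀ i, B i ∈ V) (hi : i₁ ≠ i₂)
    (hα : ∀ v ∈ V, α * B.repr v i₁ + B.repr v i₂ = 0 → B.repr v i₁ = 0 ∧ B.repr v i₂ = 0)
    {a b : ℝ} (hab : a ≠ 0 ∨ b ≠ 0) {z : Fin n → ℝ} (hz : z ∈ V)
    (habz : coordComb B i₁ i₂ a b z = 0) (hz' : B.repr z i₁ ≠ 0 ∨ B.repr z i₂ ≠ 0) :
    zonoFace (coordComb B i₁ i₂ a b) V ∈ belt (zono V) (zonoFace (coordComb B i₁ i₂ α 1) V) := by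
  refine zonoFace_mem_belt (finrank_faceDirection_coordComb hB hi hα) (coordComb_ne_zero hi hab)
    (fun v hv huv => ?_) hz habz (notMem_faceDirection_coordComb hB hα hz')
  obtain ⟨hv₁, hv₂⟩ := hα v hv (by simpa [coordComb_apply] using huv)
  simp [coordComb_apply, hv₁, hv₂]

end GenericFace

/-- `(a₂, -a₁)` makes `coordComb` vanish on a vector with coordinates `a₁, a₂` at `i₁, i₂`. -/
def sixPairs (a₁ a₂ : ℝ) : Fin 6 → ℝ × ℝ :=
  ![(0, 1), (0, -1), (1, 0), (-1, 0), (a₂, -a₁), (-a₂, a₁)]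

lemma injective_zonoFace_sixPairs {n : ℕ} {V : Finset (Fin n → ℝ)}
    {B : Module.Basis (Fin n) ℝ (Fin n → ℝ)} (hB : ∀ i, B i ∈ V) {i₁ i₂ : Fin n} (hi : i₁ ≠ i₂)
    {a₁ a₂ : ℝ} (h₁ : a₁ ≠ 0) (h₂ : a₂ ≠ 0) :
    Function.Injective fun k =>
      zonoFace (coordComb B i₁ i₂ (sixPairs a₁ a₂ k).1 (sixPairs a₁ a₂ k).2) V := by
  let q : Fin 6 → SignType × SignType := ![(0, 1), (0, -1), (1, 0), (-1, 0),
    (SignType.sign a₂, -SignType.sign a₁), (-SignType.sign a₂, SignType.sign a₁)]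
  have hpq : ∀ k,
      (SignType.sign (sixPairs a₁ a₂ k).1, SignType.sign (sixPairs a₁ a₂ k).2) = q k := by
    intro k
    fin_cases k <;> simp [sixPairs, q, Left.sign_neg]
  have hq : ∀ s t : SignType, s ≠ 0 → t ≠ 0 →
      Function.Injective ![((0 : SignType), (1 : SignType)), (0, -1), (1, 0), (-1, 0), (s, -t),
        (-s, t)] := by
    decide
  intro k k' h
  exact hq _ _ (sign_ne_zero.mpr h₂) (sign_ne_zero.mpr h₁)
    ((hpq k).symm.trans ((sign_eq_of_zonoFace_coordComb_eq hB hi h).trans (hpq k')))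

theorem exists_face_ncard_belt_ne_four {n : ℕ} {V : Finset (Fin n → ℝ)}
    (B : Module.Basis (Fin n) ℝ (Fin n → ℝ)) (hB : ∀ i, B i ∈ V) {i₁ i₂ : Fin n} (hi : i₁ ≠ i₂)
    {v₀ : Fin n → ℝ} (hv₀ : v₀ ∈ V) (h₁ : B.repr v₀ i₁ ≠ 0) (h₂ : B.repr v₀ i₂ ≠ 0) :
    ∃ G, IsFace (zono V) G ∧ G.Nonempty ∧ adim G = n - 2 ∧ (belt (zono V) G).ncard ≠ 4 := by
  obtain ⟨α, hα⟩ := exists_forall_mul_add_eq_zero (B.repr · i₁) (B.repr · i₂) V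
  have hbelt {a b : ℝ} := @zonoFace_coordComb_mem_belt n V B i₁ i₂ α hB hi hα a b
  refine ⟨_, isFace_zonoFace _ V, ⟨_, signSum_mem_zonoFace _ V⟩,
    by rw [adim_zonoFace, finrank_faceDirection_coordComb hB hi hα], fun h4 => ?_⟩
  set a₁ := B.repr v₀ i₁
  set a₂ := B.repr v₀ i₂
  have hf : ∀ k, zonoFace (coordComb B i₁ i₂ (sixPairs a₁ a₂ k).1 (sixPairs a₁ a₂ k).2) V ∈
      belt (zono V) (zonoFace (coordComb B i₁ i₂ α 1) V) := by
    have hB₁ : B.repr (B i₁) i₁ ≠ 0 ∨ B.repr (B i₁) i₂ ≠ 0 := Or.inl (by simp)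
    have hB₂ : B.repr (B i₂) i₁ ≠ 0 ∨ B.repr (B i₂) i₂ ≠ 0 := Or.inr (by simp)
    intro k
    fin_cases k
    · exact hbelt (by simp [sixPairs]) (hB i₁) (coordComb_apply_left hi _ _) hB₁
    · exact hbelt (by simp [sixPairs]) (hB i₁) (coordComb_apply_left hi _ _) hB₁
    · exact hbelt (by simp [sixPairs]) (hB i₂) (coordComb_apply_right hi _ _) hB₂
    · exact hbelt (by simp [sixPairs]) (hB i₂) (coordComb_apply_right hi _ _) hB₂
    · exact hbelt (a := a₂) (b := -a₁) (Or.inl h₂) hv₀ (by rw [coordComb_apply]; ring) (Or.inl h₁)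
    · exact hbelt (a := -a₂) (b := a₁) (Or.inl (neg_ne_zero.mpr h₂)) hv₀
        (by rw [coordComb_apply]; ring) (Or.inl h₁)
  have h6 := Set.ncard_le_ncard_of_injOn (s := Set.univ) _ (fun k _ => hf k)
    (injective_zonoFace_sixPairs hB hi h₁ h₂).injOn (Set.finite_of_ncard_ne_zero (by omega))
  rw [Set.ncard_univ, Nat.card_eq_fintype_card, Fintype.card_fin, h4] at h6
  omega

lemma abs_sum_mul_le_sum_abs {ι : Type*} (s : Finset ι) {l : ι → ℝ} (a : ι → ℝ)
    (hl : ∀ i ∈ s, |l i| ≤ 1) : |∑ i ∈ s, l i * a i| ≤ ∑ i ∈ s, |a i| :=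
  (Finset.abs_sum_le_sum_abs _ _).trans <| Finset.sum_le_sum fun i hi => by
    rw [abs_mul]; exact mul_le_of_le_one_left (abs_nonneg _) (hl i hi)

lemma exists_abs_le_one_eq_mul_of_abs_le {S m : ℝ} (h : |S| ≤ m) :
    ∃ y : ℝ, |y| ≤ 1 ∧ S = m * y := by
  rcases (abs_nonneg S).trans h |>.eq_or_lt with hm | hm
  · exact ⟨0, by simp, by simpa [← hm] using h⟩
  · refine ⟨S / m, ?_, by field_simp⟩
    rwa [abs_div, abs_of_pos hm, div_le_one hm]

lemma sum_smul_comp_eq_sum_fiberwise {α ι E : Type*} [Fintype ι] [DecidableEq ι]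
    [AddCommMonoid E] [Module ℝ E] (s : Finset α) (χ : α → ι) (c : α → ℝ) (b : ι → E) :
    ∑ v ∈ s, c v • b (χ v) = ∑ i, (∑ v ∈ s.filter (χ · = i), c v) • b i := by
  rw [← Finset.sum_fiberwise s χ]
  refine Finset.sum_congr rfl fun i _ => ?_
  rw [Finset.sum_smul]
  exact Finset.sum_congr rfl fun v hv => by rw [(Finset.mem_filter.mp hv).2]

theorem zono_eq_image_of_forall_eq_smul {n : ℕ} {ι : Type*} [Fintype ι] [DecidableEq ι]
    {V : Finset (Fin n → ℝ)} (b : ι → Fin n → ℝ) (χ : (Fin n → ℝ) → ι) (γ : (Fin n → ℝ) → ℝ)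
    (hV : ∀ v ∈ V, v = γ v • b (χ v)) :
    zono V = (fun y : ι → ℝ => ∑ i, ((∑ v ∈ V.filter (χ · = i), |γ v|) * y i) • b i) ''
      {y | ∀ i, |y i| ≤ 1} := by
  ext x
  constructor
  · rintro ⟨l, hl, rfl⟩
    have hx : ∑ v ∈ V, l v • v = ∑ i, (∑ v ∈ V.filter (χ · = i), l v * γ v) • b i := by
      rw [← sum_smul_comp_eq_sum_fiberwise]
      exact Finset.sum_congr rfl fun v hv => by rw [mul_smul, ← hV v hv]
    choose y hy using fun i => exists_abs_le_one_eq_mul_of_abs_le <|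
      abs_sum_mul_le_sum_abs (V.filter (χ · = i)) γ fun v hv =>
        abs_le.mpr (hl v (Finset.mem_filter.mp hv).1)
    exact ⟨y, fun i => (hy i).1, by rw [hx]; exact Finset.sum_congr rfl fun i _ => by rw [(hy i).2]⟩
  · rintro ⟨y, hy, rfl⟩
    refine ⟨fun v => y (χ v) * SignType.sign (γ v), fun v _ => abs_le.mp ?_, ?_⟩
    · rw [abs_mul]
      exact mul_le_one₀ (hy _) (abs_nonneg _) (abs_sign_le_one _)
    · calc ∑ i, ((∑ v ∈ V.filter (χ · = i), |γ v|) * y i) • b i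
          = ∑ i, (∑ v ∈ V.filter (χ · = i), y (χ v) * |γ v|) • b i := by
            refine Finset.sum_congr rfl fun i _ => ?_
            rw [Finset.sum_mul]
            congr 1
            exact Finset.sum_congr rfl fun v hv => by rw [(Finset.mem_filter.mp hv).2, mul_comm]
        _ = ∑ v ∈ V, (y (χ v) * SignType.sign (γ v)) • v := by
            rw [← sum_smul_comp_eq_sum_fiberwise]
            refine Finset.sum_congr rfl fun v hv => ?_
            rw [mul_smul, mul_smul, ← sign_mul_self, mul_smul, ← hV v hv]

lemma Module.Basis.eq_of_apply_eq_smul {ι R M : Type*} [Semiring R] [Nontrivial R]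
    [AddCommMonoid M] [Module R M] (B : Module.Basis ι R M) {i j : ι} {c : R}
    (h : B i = c • B j) : j = i := by
  by_contra hne
  simpa [Finsupp.single_apply, hne] using congrArg (fun x => B.repr x i) h

theorem exists_linearEquiv_zono_eq_image_cube {n : ℕ} [Nonempty (Fin n)]
    {V : Finset (Fin n → ℝ)} (B : Module.Basis (Fin n) ℝ (Fin n → ℝ)) (hB : ∀ i, B i ∈ V)
    (hV : ∀ v ∈ V, ∃ i, ∃ c : ℝ, v = c • B i) :
    ∃ A : (Fin n → ℝ) ≃ₗ[ℝ] (Fin n → ℝ), zono V = ⇑A '' {x : Fin n → ℝ | ∀ i, |x i| ≤ 1} := by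
  choose! χ γ hχγ using hV
  set m : Fin n → ℝ := fun i => ∑ v ∈ V.filter (χ · = i), |γ v|
  have hm : ∀ i, m i ≠ 0 := by
    intro i
    have hχ : χ (B i) = i := B.eq_of_apply_eq_smul (hχγ _ (hB i))
    have hγ : γ (B i) ≠ 0 := fun h => B.ne_zero i (by rw [hχγ _ (hB i), h, zero_smul])
    exact ((abs_pos.mpr hγ).trans_le (Finset.single_le_sum (fun v _ => abs_nonneg (γ v))
      (Finset.mem_filter.mpr ⟨hB i, hχ⟩))).ne'
  refine ⟨(LinearEquiv.piCongrRight fun i => LinearEquiv.smulOfNeZero ℝ ℝ (m i) (hm i)).trans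
    B.equivFun.symm, ?_⟩
  rw [zono_eq_image_of_forall_eq_smul B χ γ hχγ]
  congr 1
  ext y
  simp [m, Module.Basis.equivFun_symm_apply]

/-- Let `n ≥ 3` and let `V` be a finite subset of `ℝⁿ` spanning `ℝⁿ` such that every
belt of the zonotope `Z(V)` consists of exactly four facets. Then `Z(V)` is the image
of the cube `[−1,1]ⁿ` under an invertible linear transformation. -/
theorem stmt19 (n : ℕ) (hn : 3 ≤ n) (V : Finset (Fin n → ℝ))
    (hspan : Submodule.span ℝ (V : Set (Fin n → ℝ)) = ⊤)
    (hbelt : ∀ G : Set (Fin n → ℝ), IsFace (zono V) G → G.Nonempty → adim G = n - 2 →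
      (belt (zono V) G).ncard = 4) :
    ∃ A : (Fin n → ℝ) ≃ₗ[ℝ] (Fin n → ℝ),
      zono V = ⇑A '' {x : Fin n → ℝ | ∀ i, |x i| ≤ 1} := by
  have : Nonempty (Fin n) := ⟨⟨0, by omega⟩⟩
  obtain ⟨B, hB⟩ := exists_basis_subset hspan
  by_cases hpar : ∀ v ∈ V, ∃ i, ∃ c : ℝ, v = c • B i
  · exact exists_linearEquiv_zono_eq_image_cube B hB hpar
  push Not at hpar
  obtain ⟨v₀, hv₀, hv₀B⟩ := hpar
  obtain ⟨i₁, i₂, hi, h₁, h₂⟩ := B.exists_repr_ne_zero_of_forall_ne_smul hv₀B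
  obtain ⟨G, hG, hGne, hGdim, hcard⟩ := exists_face_ncard_belt_ne_four B hB hi hv₀ h₁ h₂
  exact absurd (hbelt G hG hGne hGdim) hcard
end
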